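/- arXiv:1204.4547 — 4 statements merged into one kernel-verified Lean document; each statement's English description precedes it below -/
import Mathlib

section
/- Let n ≥ 2 and let the right-hand sides be specialised to the associahedron, i.e. w_δ = |R_δ|(|R_δ|+1)/2 for every proper diagonal δ and z_{[n]} = n(n+1)/2. Then the Minkowski coefficient of the full set satisfies y_{[n]} = (−1)^{|U|}. -/
open Finset

attribute [local instance] Classical.propDecidable

namespace AssocPaper

/-- `x` and `y` are consecutive elements of the finite set `S`. -/
def ConsecIn (S : Finset ℕ) (x y : ℕ) : Prop :=
  x ∈ S ∧ y ∈ S ∧ x < y ∧ ∀ z ∈ S, ¬ (x < z ∧ z < y)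

/-- `D̄ = D ∪ {0, n+1}`. -/
def Dbar (n : ℕ) (D : Finset ℕ) : Finset ℕ := insert 0 (insert (n + 1) D)

/-- The boundary edges of the `c`-labeled `(n+2)`-gon, given by endpoints `x < y`:
pairs of consecutive elements of `D̄`; if `U ≠ ∅` also `{0, min U}`, `{max U, n+1}` and
pairs of consecutive elements of `U`; if `U = ∅` also `{0, n+1}`. -/
def IsBoundary (n : ℕ) (D U : Finset ℕ) (x y : ℕ) : Prop :=
  ConsecIn (Dbar n D) x y
    ∨ (U.Nonempty ∧
        ((x = 0 ∧ y ∈ U ∧ ∀ u ∈ U, y ≤ u)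
          ∨ (y = n + 1 ∧ x ∈ U ∧ ∀ u ∈ U, u ≤ x)
          ∨ ConsecIn U x y))
    ∨ (U = ∅ ∧ x = 0 ∧ y = n + 1)

/-- `{x, y}` (with `x < y ≤ n+1`) is a proper diagonal: a diagonal of the
`(n+2)`-gon which is not a boundary edge. -/
def IsProper (n : ℕ) (D U : Finset ℕ) (x y : ℕ) : Prop :=
  x < y ∧ y ≤ n + 1 ∧ ¬ IsBoundary n D U x y

/-- The set `R_δ` for a proper diagonal `δ = {x,y}` with `x < y`. -/
noncomputable def Rdiag (n : ℕ) (D U : Finset ℕ) (x y : ℕ) : Finset ℕ :=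
  if x ∈ U then
    (if y ∈ U then (D ∪ U.filter fun u => u ≤ x) ∪ U.filter fun u => y ≤ u
     else D.filter (fun d => d < y) ∪ U.filter fun u => u ≤ x)
  else
    (if y ∈ U then D.filter (fun d => x < d) ∪ U.filter fun u => y ≤ u
     else D.filter fun d => x < d ∧ d < y)

/-- The extension of `R` to non-proper and degenerate diagonals `δ = {x,y}`, `x ≤ y`:
`R_δ = [n]` if `U = ∅` and `δ = {0,n+1}`; for other non-proper or degenerate `δ`,
`R_δ = ∅` if `x,y ∈ D̄` and `R_δ = [n]` otherwise. -/
noncomputable def Rext (n : ℕ) (D U : Finset ℕ) (x y : ℕ) : Finset ℕ :=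
  if IsProper n D U x y then Rdiag n D U x y
  else if U = ∅ ∧ x = 0 ∧ y = n + 1 then Finset.Icc 1 n
  else if x ∈ U ∨ y ∈ U then Finset.Icc 1 n
  else ∅

/-- The extension of the right-hand sides `z_{R_δ}` to non-proper and degenerate
diagonals, given the values `w` on proper diagonals and the value `zn = z_{[n]}`. -/
noncomputable def zext (n : ℕ) (D U : Finset ℕ) (w : ℕ × ℕ → ℝ) (zn : ℝ) (x y : ℕ) : ℝ :=
  if IsProper n D U x y then w (x, y)
  else if U = ∅ ∧ x = 0 ∧ y = n + 1 then zn
  else if x ∈ U ∨ y ∈ U then zn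
  else 0

/-- `a(I)`: the largest element of `D ∪ {0}` smaller than `min I`. -/
noncomputable def aI (D I : Finset ℕ) : ℕ :=
  ((insert 0 D).filter fun e => ∀ i ∈ I, e < i).sup id

/-- `b(I)`: the smallest element of `D ∪ {n+1}` larger than `max I`. -/
noncomputable def bI (n : ℕ) (D I : Finset ℕ) : ℕ :=
  sInf {e : ℕ | e ∈ insert (n + 1) D ∧ ∀ i ∈ I, i < e}

/-- The minimum element `γ` of `I` (junk value for `I = ∅`). -/
noncomputable def minEl (I : Finset ℕ) : ℕ := sInf {i : ℕ | i ∈ I}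

/-- The maximum element `Γ` of `I` (junk value `0` for `I = ∅`). -/
noncomputable def maxEl (I : Finset ℕ) : ℕ := I.sup id

/-- A nonempty `I ⊆ [n]` is nested if every `d ∈ D` with `a(I) < d < b(I)` lies in `I`. -/
def IsNested (n : ℕ) (D I : Finset ℕ) : Prop :=
  I.Nonempty ∧ I ⊆ Finset.Icc 1 n ∧
    ∀ d ∈ D, aI D I < d → d < bI n D I → d ∈ I

/-- The nested components of `I`: the inclusion-maximal nested subsets of `I`. -/
noncomputable def nestedComponents (n : ℕ) (D I : Finset ℕ) : Finset (Finset ℕ) :=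
  I.powerset.filter fun J =>
    IsNested n D J ∧ ∀ K ∈ I.powerset, IsNested n D K → J ⊆ K → J = K

/-- `v(I)`: the number of nested components of `I`. -/
noncomputable def vI (n : ℕ) (D I : Finset ℕ) : ℕ := (nestedComponents n D I).card

/-- `x` is the last element of one of the up intervals of `J`
(an element of `J ∩ U` whose successor in `U`, if any, is not in `J`). -/
def IsRunEnd (U J : Finset ℕ) (x : ℕ) : Prop :=
  x ∈ J ∧ x ∈ U ∧ ∀ y, ConsecIn U x y → y ∉ J

/-- `y` is the first element of one of the up intervals of `J`
(an element of `J ∩ U` whose predecessor in `U`, if any, is not in `J`). -/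
def IsRunStart (U J : Finset ℕ) (y : ℕ) : Prop :=
  y ∈ J ∧ y ∈ U ∧ ∀ x, ConsecIn U x y → x ∉ J

/-- `{x,y}` is one of the diagonals `δ_1(J), …, δ_{w+1}(J)` associated to a nested
set `J` with `a = a(J)`, `b = b(J)` and up intervals `[α_1,β_1]_U, …, [α_w,β_w]_U`,
namely `{a,α_1}, {β_1,α_2}, …, {β_w,b}` (and `{a,b}` when `w = 0`). -/
def AssocDiag (n : ℕ) (D U J : Finset ℕ) (x y : ℕ) : Prop :=
  x < y ∧ (x = aI D J ∨ IsRunEnd U J x) ∧ (y = bI n D J ∨ IsRunStart U J y) ∧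
    ∀ u ∈ J ∩ U, ¬ (x < u ∧ u < y)

/-- `W(J)`: the proper diagonals among the diagonals associated to the nested set `J`. -/
noncomputable def WJ (n : ℕ) (D U J : Finset ℕ) : Finset (ℕ × ℕ) :=
  (Finset.range (n + 2) ×ˢ Finset.range (n + 2)).filter fun p =>
    AssocDiag n D U J p.1 p.2 ∧ IsProper n D U p.1 p.2

/-- The tight value `z^c_I = ∑_i ( ∑_{j ∈ W(J_i)} w_{δ_j(J_i)} − (|W(J_i)|−1)·z_{[n]} )`,
the sum running over the nested components `J_i` of `I` (so `z^c_∅ = 0`). -/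
noncomputable def zc (n : ℕ) (D U : Finset ℕ) (w : ℕ × ℕ → ℝ) (zn : ℝ) (I : Finset ℕ) : ℝ :=
  ∑ J ∈ nestedComponents n D I,
    ((∑ p ∈ WJ n D U J, w p) - (((WJ n D U J).card : ℝ) - 1) * zn)

/-- The Minkowski coefficient `y_I = ∑_{J ⊆ I} (−1)^{|I∖J|} z^c_J`. -/
noncomputable def yI (n : ℕ) (D U : Finset ℕ) (w : ℕ × ℕ → ℝ) (zn : ℝ) (I : Finset ℕ) : ℝ :=
  ∑ J ∈ I.powerset, (-1 : ℝ) ^ (I \ J).card * zc n D U w zn J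

/-- The associahedron right-hand sides `w_δ = |R_δ|·(|R_δ|+1)/2`. -/
noncomputable def wAs (n : ℕ) (D U : Finset ℕ) (p : ℕ × ℕ) : ℝ :=
  (((Rdiag n D U p.1 p.2).card : ℝ) * (((Rdiag n D U p.1 p.2).card : ℝ) + 1)) / 2

/-- The associahedron value `z_{[n]} = n(n+1)/2`. -/
noncomputable def znAs (n : ℕ) : ℝ := ((n : ℝ) * ((n : ℝ) + 1)) / 2

/-!
Expanding each `z^c_J` over the nested components `K` of `J` and summing over `J` first,
inclusion–exclusion keeps only the nested `K` such that every element of `[n]` lies in `K` or in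
`nestedBoundary n D U K`; these are the nonempty `K ⊇ D \ {1, n}`, weighted by
`(-1)^|[n] \ K|`. Exchanging this sum with the sum over the diagonals `{x, y}` of `K`: adding `1`
to `K` (or removing it) does not affect whether `{x, y}` is a diagonal of `K` unless
`x ∈ {0, 1}`, and likewise for `n` and `y ∈ {n, n + 1}`, so only the four corner diagonals
survive. A corner `{x, y}` is a diagonal of `K` exactly for `K = D \ {x, y} = R_{x,y}`, so with
`k = |D|` what remains is `(-1)^|U|` times the second difference of the triangular numbers at
`k`, which is `1`; the `z_{[n]}` terms cancel, also when `D = {1, n}`, where `K = ∅` is excluded.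
-/

section AlternatingSums

variable {α R : Type*} [DecidableEq α] [Ring R]

theorem sum_powerset_filter_neg_one_pow_card_sdiff_eq_zero {C : Finset α} {v : α} (hv : v ∈ C)
    (P : Finset α → Prop) [DecidablePred P] (hP : ∀ K ⊆ C, v ∉ K → (P (insert v K) ↔ P K)) :
    ∑ K ∈ C.powerset with P K, (-1 : R) ^ #(C \ K) = 0 := by
  obtain ⟨C', hvC', rfl⟩ : ∃ C', v ∉ C' ∧ C = insert v C' :=
    ⟨C.erase v, notMem_erase v C, (insert_erase hv).symm⟩
  rw [sum_filter, sum_powerset_insert hvC', ← sum_add_distrib]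
  refine sum_eq_zero fun K hK => ?_
  have hKC' := mem_powerset.1 hK
  have hvK : v ∉ K := fun h => hvC' (hKC' h)
  have hcard : #(insert v C' \ K) = #(insert v C' \ insert v K) + 1 := by
    rw [insert_sdiff_of_notMem _ hvK, insert_sdiff_insert, sdiff_insert_of_notMem hvC',
      card_insert_of_notMem fun h => hvC' (mem_sdiff.1 h).1]
  simp only [hP K (hKC'.trans (subset_insert v C')) hvK, hcard, pow_succ]
  split_ifs <;> simp

theorem sum_powerset_filter_subset_disjoint {C A B : Finset α} (hAC : A ⊆ C)
    (hAB : Disjoint A B) :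
    ∑ J ∈ C.powerset with A ⊆ J ∧ Disjoint J B, (-1 : R) ^ #(C \ J) =
      if C ⊆ A ∪ B then (-1) ^ #(C \ A) else 0 := by
  split_ifs with hC
  · refine sum_eq_single_of_mem A (mem_filter.2 ⟨mem_powerset.2 hAC, subset_rfl, hAB⟩) ?_
    simp only [mem_filter, mem_powerset]
    rintro J ⟨hJC, hAJ, hJB⟩ hJA
    refine absurd (subset_antisymm (fun x hx => ?_) hAJ) hJA
    exact (mem_union.1 (hC (hJC hx))).resolve_right (disjoint_left.1 hJB hx)
  · obtain ⟨v, hvC, hvAB⟩ := not_subset.1 hC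
    rw [mem_union, not_or] at hvAB
    refine sum_powerset_filter_neg_one_pow_card_sdiff_eq_zero hvC _ fun K _ _ => ?_
    rw [subset_insert_iff_of_notMem hvAB.1, disjoint_insert_left]
    exact ⟨fun h => ⟨h.1, h.2.2⟩, fun h => ⟨h.1, hvAB.2, h.2⟩⟩

end AlternatingSums

structure IsDownUpPartition (n : ℕ) (D U : Finset ℕ) : Prop where
  two_le : 2 ≤ n
  union_eq : D ∪ U = Icc 1 n
  disjoint : Disjoint D U
  one_mem : 1 ∈ D
  last_mem : n ∈ D

namespace IsDownUpPartition

variable {n : ℕ} {D U : Finset ℕ}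

theorem down_subset (h : IsDownUpPartition n D U) : D ⊆ Icc 1 n :=
  h.union_eq ▸ subset_union_left

theorem mem_down_or_up (h : IsDownUpPartition n D U) {i : ℕ} (hi : i ∈ Icc 1 n) :
    i ∈ D ∨ i ∈ U :=
  mem_union.1 (h.union_eq ▸ hi)

theorem bounds_of_mem_up (h : IsDownUpPartition n D U) {u : ℕ} (hu : u ∈ U) :
    1 < u ∧ u < n := by
  have hu' := mem_Icc.1 (h.union_eq ▸ mem_union_right D hu : u ∈ Icc 1 n)
  have h1 : u ≠ 1 := fun e => disjoint_left.1 h.disjoint h.one_mem (e ▸ hu)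
  have hn : u ≠ n := fun e => disjoint_left.1 h.disjoint h.last_mem (e ▸ hu)
  omega

theorem notMem_up_of_le_one (h : IsDownUpPartition n D U) {x : ℕ} (hx : x ≤ 1) : x ∉ U :=
  fun hu => by have := h.bounds_of_mem_up hu; omega

theorem notMem_up_of_le (h : IsDownUpPartition n D U) {y : ℕ} (hy : n ≤ y) : y ∉ U :=
  fun hu => by have := h.bounds_of_mem_up hu; omega

end IsDownUpPartition

section Gaps

variable {n : ℕ} {D K : Finset ℕ}

theorem aI_mem_and_lt (hK : K ⊆ Icc 1 n) : aI D K ∈ insert 0 D ∧ ∀ i ∈ K, aI D K < i := by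
  have hne : {e ∈ insert 0 D | ∀ i ∈ K, e < i}.Nonempty :=
    ⟨0, mem_filter.2 ⟨mem_insert_self _ _, fun i hi => (mem_Icc.1 (hK hi)).1⟩⟩
  obtain ⟨e, he, hsup⟩ := exists_mem_eq_sup _ hne id
  rw [aI, hsup]
  exact (mem_filter.1 he)

theorem le_aI {e : ℕ} (he : e ∈ insert 0 D) (h : ∀ i ∈ K, e < i) : e ≤ aI D K :=
  le_sup (f := id) (mem_filter.2 ⟨he, h⟩)

theorem bI_mem_and_lt (hK : K ⊆ Icc 1 n) :
    bI n D K ∈ insert (n + 1) D ∧ ∀ i ∈ K, i < bI n D K :=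
  Nat.sInf_mem (s := {e | e ∈ insert (n + 1) D ∧ ∀ i ∈ K, i < e})
    ⟨n + 1, mem_insert_self _ _, fun _ hi => Nat.lt_succ_of_le (mem_Icc.1 (hK hi)).2⟩

theorem bI_le {e : ℕ} (he : e ∈ insert (n + 1) D) (h : ∀ i ∈ K, i < e) : bI n D K ≤ e :=
  Nat.sInf_le ⟨he, h⟩

theorem aI_lt_bI (hK : K ⊆ Icc 1 n) (hne : K.Nonempty) : aI D K < bI n D K :=
  let ⟨i, hi⟩ := hne
  ((aI_mem_and_lt hK).2 i hi).trans ((bI_mem_and_lt hK).2 i hi)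

theorem IsNested.insert (hK : IsNested n D K) {e : ℕ} (he : e ∈ Icc 1 n)
    (hae : aI D K ≤ e) (heb : e ≤ bI n D K) : IsNested n D (insert e K) := by
  obtain ⟨hne, hKn, hnest⟩ := hK
  refine ⟨insert_nonempty e K, insert_subset he hKn, fun d hd had hdb => ?_⟩
  rcases eq_or_ne d e with rfl | hde
  · exact mem_insert_self _ _
  refine mem_insert_of_mem (hnest d hd ?_ ?_)
  · by_contra hda
    refine (le_aI (mem_insert_of_mem hd) fun i hi => ?_).not_gt had
    rcases mem_insert.1 hi with rfl | hi
    · omega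
    · exact (not_lt.1 hda).trans_lt ((aI_mem_and_lt hKn).2 i hi)
  · by_contra hdb'
    refine (bI_le (mem_insert_of_mem hd) fun i hi => ?_).not_gt hdb
    rcases mem_insert.1 hi with rfl | hi
    · omega
    · exact ((bI_mem_and_lt hKn).2 i hi).trans_le (not_lt.1 hdb')

end Gaps

noncomputable def nestedBoundary (n : ℕ) (D U K : Finset ℕ) : Finset ℕ :=
  insert (aI D K) (insert (bI n D K) ({u ∈ U | aI D K < u ∧ u < bI n D K} \ K))

section Components

variable {n : ℕ} {D U : Finset ℕ}

theorem le_and_le_and_notMem_of_mem_nestedBoundary {K : Finset ℕ} (hK : K ⊆ Icc 1 n)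
    (hne : K.Nonempty) {x : ℕ} (hx : x ∈ nestedBoundary n D U K) :
    aI D K ≤ x ∧ x ≤ bI n D K ∧ x ∉ K := by
  have hab := aI_lt_bI (D := D) hK hne
  simp only [nestedBoundary, mem_insert, mem_sdiff, mem_filter] at hx
  rcases hx with rfl | rfl | ⟨⟨-, hax, hxb⟩, hxK⟩
  · exact ⟨le_rfl, hab.le, fun h => lt_irrefl _ ((aI_mem_and_lt hK).2 _ h)⟩
  · exact ⟨hab.le, le_rfl, fun h => lt_irrefl _ ((bI_mem_and_lt hK).2 _ h)⟩
  · exact ⟨hax.le, hxb.le, hxK⟩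

theorem IsNested.subset_of_disjoint_nestedBoundary (h : IsDownUpPartition n D U)
    {J K K' : Finset ℕ} (hK : IsNested n D K) (hK' : IsNested n D K') (hKK' : K ⊆ K')
    (hK'J : K' ⊆ J) (hdisj : Disjoint J (nestedBoundary n D U K)) : K' ⊆ K := by
  intro x hx
  have hKn := hK.2.1
  have hK'n := hK'.2.1
  have hab := aI_lt_bI (D := D) hKn hK.1
  have haa : aI D K' ≤ aI D K :=
    le_aI (aI_mem_and_lt hK'n).1 fun i hi => (aI_mem_and_lt hK'n).2 i (hKK' hi)
  have hbb : bI n D K ≤ bI n D K' :=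
    bI_le (bI_mem_and_lt hK'n).1 fun i hi => (bI_mem_and_lt hK'n).2 i (hKK' hi)
  have hax : aI D K < x := by
    by_contra hxa
    have haD : aI D K ∈ D := by
      have := (mem_Icc.1 (hK'n hx)).1
      exact (mem_insert.1 (aI_mem_and_lt hKn).1).resolve_left (by omega)
    have haK' := hK'.2.2 _ haD (((aI_mem_and_lt hK'n).2 x hx).trans_le (not_lt.1 hxa))
      (hab.trans_le hbb)
    exact disjoint_left.1 hdisj (hK'J haK') (mem_insert_self _ _)
  have hxb : x < bI n D K := by
    by_contra hxb
    have hbD : bI n D K ∈ D := by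
      have := (mem_Icc.1 (hK'n hx)).2
      exact (mem_insert.1 (bI_mem_and_lt hKn).1).resolve_left (by omega)
    have hbK' := hK'.2.2 _ hbD (haa.trans_lt hab)
      ((not_lt.1 hxb).trans_lt ((bI_mem_and_lt hK'n).2 x hx))
    exact disjoint_left.1 hdisj (hK'J hbK') (mem_insert_of_mem (mem_insert_self _ _))
  rcases h.mem_down_or_up (hK'n hx) with hxD | hxU
  · exact hK.2.2 x hxD hax hxb
  · by_contra hxK
    refine disjoint_left.1 hdisj (hK'J hx) (mem_insert_of_mem (mem_insert_of_mem ?_))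
    exact mem_sdiff.2 ⟨mem_filter.2 ⟨hxU, hax, hxb⟩, hxK⟩

theorem mem_nestedComponents_iff (h : IsDownUpPartition n D U) {J K : Finset ℕ}
    (hJ : J ⊆ Icc 1 n) :
    K ∈ nestedComponents n D J ↔
      IsNested n D K ∧ K ⊆ J ∧ Disjoint J (nestedBoundary n D U K) := by
  simp only [nestedComponents, mem_filter, mem_powerset]
  constructor
  · rintro ⟨hKJ, hK, hmax⟩
    refine ⟨hK, hKJ, disjoint_left.2 fun x hxJ hx => ?_⟩
    obtain ⟨hax, hxb, hxK⟩ := le_and_le_and_notMem_of_mem_nestedBoundary hK.2.1 hK.1 hx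
    have := hmax _ (insert_subset hxJ hKJ) (hK.insert (hJ hxJ) hax hxb) (subset_insert x K)
    exact hxK (this ▸ mem_insert_self x K)
  · rintro ⟨hK, hKJ, hdisj⟩
    exact ⟨hKJ, hK, fun K' hK'J hK' hKK' =>
      subset_antisymm hKK' (hK.subset_of_disjoint_nestedBoundary h hK' hKK' hK'J hdisj)⟩

theorem sum_filter_mem_nestedComponents (h : IsDownUpPartition n D U) {K : Finset ℕ}
    (hK : K ⊆ Icc 1 n) :
    ∑ J ∈ (Icc 1 n).powerset with K ∈ nestedComponents n D J, (-1 : ℝ) ^ #(Icc 1 n \ J) =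
      if IsNested n D K ∧ Icc 1 n ⊆ K ∪ nestedBoundary n D U K then (-1) ^ #(Icc 1 n \ K)
      else 0 := by
  by_cases hnest : IsNested n D K
  · have hdisj : Disjoint K (nestedBoundary n D U K) :=
      disjoint_left.2 fun x hxK hx =>
        (le_and_le_and_notMem_of_mem_nestedBoundary hK hnest.1 hx).2.2 hxK
    rw [filter_congr fun J hJ => (mem_nestedComponents_iff h (mem_powerset.1 hJ)).trans
        (and_iff_right hnest), sum_powerset_filter_subset_disjoint hK hdisj]
    simp only [hnest, true_and]
  · rw [if_neg fun h' => hnest h'.1]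
    refine sum_eq_zero fun J hJ => absurd ?_ hnest
    exact ((mem_nestedComponents_iff h (mem_powerset.1 (mem_filter.1 hJ).1)).1
      (mem_filter.1 hJ).2).1

end Components

noncomputable def diagExcess (n : ℕ) (D U : Finset ℕ) (p : ℕ × ℕ) : ℝ :=
  if IsProper n D U p.1 p.2 then wAs n D U p - znAs n else 0

noncomputable def componentValue (n : ℕ) (D U K : Finset ℕ) : ℝ :=
  znAs n + ∑ p ∈ range (n + 2) ×ˢ range (n + 2) with AssocDiag n D U K p.1 p.2,
    diagExcess n D U p

section Expansion

variable {n : ℕ} {D U : Finset ℕ}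

theorem zc_eq_sum_componentValue (J : Finset ℕ) :
    zc n D U (wAs n D U) (znAs n) J = ∑ K ∈ nestedComponents n D J, componentValue n D U K := by
  refine sum_congr rfl fun K _ => ?_
  rw [componentValue, sum_filter, ← sum_filter, WJ, ← filter_filter]
  simp only [diagExcess]
  rw [← sum_filter, sum_sub_distrib, sum_const, nsmul_eq_mul]
  ring

theorem yI_eq_sum_isNested (h : IsDownUpPartition n D U) :
    yI n D U (wAs n D U) (znAs n) (Icc 1 n) =
      ∑ K ∈ (Icc 1 n).powerset with IsNested n D K ∧ Icc 1 n ⊆ K ∪ nestedBoundary n D U K,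
        (-1 : ℝ) ^ #(Icc 1 n \ K) * componentValue n D U K := by
  have hswap : ∀ J K, J ∈ (Icc 1 n).powerset ∧ K ∈ nestedComponents n D J ↔
      J ∈ {J ∈ (Icc 1 n).powerset | K ∈ nestedComponents n D J} ∧ K ∈ (Icc 1 n).powerset := by
    intro J K
    simp only [mem_filter, mem_powerset]
    exact (and_iff_left_of_imp fun ⟨hJ, hK⟩ =>
      (mem_powerset.1 (mem_filter.1 hK).1).trans hJ).symm
  simp only [yI, zc_eq_sum_componentValue, mul_sum]
  rw [sum_comm' hswap, sum_filter]
  refine sum_congr rfl fun K hK => ?_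
  rw [← sum_mul, sum_filter_mem_nestedComponents h (mem_powerset.1 hK), ite_mul, zero_mul]

end Expansion

section Covering

variable {n : ℕ} {D U K : Finset ℕ}

theorem aI_eq_of_sdiff_subset (h : IsDownUpPartition n D U) (hK : K ⊆ Icc 1 n)
    (hne : K.Nonempty) (hDK : D \ {1, n} ⊆ K) : aI D K = if 1 ∈ K then 0 else 1 := by
  obtain ⟨ha, haK⟩ := aI_mem_and_lt (D := D) hK
  split_ifs with h1
  · have := haK 1 h1
    omega
  refine le_antisymm ?_ (le_aI (mem_insert_of_mem h.one_mem) fun i hi => ?_)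
  · obtain ⟨k, hk⟩ := hne
    have hkn := (mem_Icc.1 (hK hk)).2
    have := haK k hk
    rcases mem_insert.1 ha with h0 | haD
    · omega
    by_contra ha1
    have haK' := hDK (mem_sdiff.2 ⟨haD, by simp only [mem_insert, mem_singleton]; omega⟩)
    exact lt_irrefl _ (haK _ haK')
  · have := (mem_Icc.1 (hK hi)).1
    have : i ≠ 1 := fun e => h1 (e ▸ hi)
    omega

theorem bI_eq_of_sdiff_subset (h : IsDownUpPartition n D U) (hK : K ⊆ Icc 1 n)
    (hne : K.Nonempty) (hDK : D \ {1, n} ⊆ K) : bI n D K = if n ∈ K then n + 1 else n := by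
  obtain ⟨hb, hbK⟩ := bI_mem_and_lt (D := D) hK
  split_ifs with hn
  · have := hbK n hn
    have := bI_le (D := D) (mem_insert_self (n + 1) D) fun i hi =>
      Nat.lt_succ_of_le (mem_Icc.1 (hK hi)).2
    omega
  refine le_antisymm (bI_le (mem_insert_of_mem h.last_mem) fun i hi => ?_) ?_
  · have := (mem_Icc.1 (hK hi)).2
    have : i ≠ n := fun e => hn (e ▸ hi)
    omega
  · obtain ⟨k, hk⟩ := hne
    have hk1 := (mem_Icc.1 (hK hk)).1
    have := hbK k hk
    rcases mem_insert.1 hb with h0 | hbD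
    · omega
    by_contra hbn
    have hbK' := hDK (mem_sdiff.2 ⟨hbD, by simp only [mem_insert, mem_singleton]; omega⟩)
    exact lt_irrefl _ (hbK _ hbK')

theorem isNested_and_subset_union_nestedBoundary_iff (h : IsDownUpPartition n D U)
    (hK : K ⊆ Icc 1 n) :
    IsNested n D K ∧ Icc 1 n ⊆ K ∪ nestedBoundary n D U K ↔ D \ {1, n} ⊆ K ∧ K.Nonempty := by
  have h2 := h.two_le
  constructor
  · rintro ⟨hnest, hcover⟩
    have hbetween : ∀ i ∈ Icc 1 n, aI D K ≤ i ∧ i ≤ bI n D K := fun i hi =>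
      (mem_union.1 (hcover hi)).elim
        (fun hiK => ⟨((aI_mem_and_lt hK).2 i hiK).le, ((bI_mem_and_lt hK).2 i hiK).le⟩)
        fun hib =>
          (le_and_le_and_notMem_of_mem_nestedBoundary hK hnest.1 hib).imp_right And.left
    have ha := (hbetween 1 (mem_Icc.2 ⟨le_rfl, by omega⟩)).1
    have hb := (hbetween n (mem_Icc.2 ⟨by omega, le_rfl⟩)).2
    refine ⟨fun d hd => ?_, hnest.1⟩
    simp only [mem_sdiff, mem_insert, mem_singleton, not_or] at hd
    have := mem_Icc.1 (h.down_subset hd.1)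
    exact hnest.2.2 d hd.1 (by omega) (by omega)
  · rintro ⟨hDK, hne⟩
    have ha := aI_eq_of_sdiff_subset h hK hne hDK
    have hb := bI_eq_of_sdiff_subset h hK hne hDK
    refine ⟨⟨hne, hK, fun d hd had hdb => ?_⟩, fun i hi => ?_⟩
    · by_contra hdK
      have : d = 1 ∨ d = n := by by_contra! hd'; exact hdK (hDK (by simp [hd, hd']))
      rcases this with rfl | rfl <;> split_ifs at ha hb <;> omega
    · by_cases hiK : i ∈ K
      · exact mem_union_left _ hiK
      refine mem_union_right _ ?_
      simp only [nestedBoundary, mem_insert, mem_sdiff, mem_filter]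
      rcases h.mem_down_or_up hi with hiD | hiU
      · have : i = 1 ∨ i = n := by by_contra! hi'; exact hiK (hDK (by simp [hiD, hi']))
        rcases this with rfl | rfl <;> simp [ha, hb, hiK]
      · have := h.bounds_of_mem_up hiU
        right; right
        refine ⟨⟨hiU, ?_, ?_⟩, hiK⟩ <;> split_ifs at ha hb <;> omega

end Covering

section Diagonals

variable {n : ℕ} {D U K : Finset ℕ} {x y : ℕ}

theorem assocDiag_nonempty (h1D : 1 ∈ D) (hxy : AssocDiag n D U K x y) : K.Nonempty := by
  rw [nonempty_iff_ne_empty]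
  rintro rfl
  obtain ⟨hlt, hx | hx, hy | hy, -⟩ := hxy
  · have ha : 1 ≤ aI D ∅ := le_aI (mem_insert_of_mem h1D) (by simp)
    have hb : bI n D ∅ ≤ 1 := bI_le (mem_insert_of_mem h1D) (by simp)
    omega
  all_goals simp_all [IsRunEnd, IsRunStart]

theorem isRunEnd_insert_of_notMem {v : ℕ} (hv : v ∉ U) :
    IsRunEnd U (insert v K) x ↔ IsRunEnd U K x := by
  have hne : ∀ z ∈ U, z ≠ v := fun z hz e => hv (e ▸ hz)
  simp only [IsRunEnd]
  constructor
  · rintro ⟨hxK, hxU, hnext⟩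
    exact ⟨(mem_insert.1 hxK).resolve_left (hne x hxU), hxU,
      fun z hz hzK => hnext z hz (mem_insert_of_mem hzK)⟩
  · rintro ⟨hxK, hxU, hnext⟩
    exact ⟨mem_insert_of_mem hxK, hxU,
      fun z hz hzK => hnext z hz ((mem_insert.1 hzK).resolve_left (hne z hz.2.1))⟩

theorem isRunStart_insert_of_notMem {v : ℕ} (hv : v ∉ U) :
    IsRunStart U (insert v K) y ↔ IsRunStart U K y := by
  have hne : ∀ z ∈ U, z ≠ v := fun z hz e => hv (e ▸ hz)
  simp only [IsRunStart]
  constructor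
  · rintro ⟨hyK, hyU, hprev⟩
    exact ⟨(mem_insert.1 hyK).resolve_left (hne y hyU), hyU,
      fun z hz hzK => hprev z hz (mem_insert_of_mem hzK)⟩
  · rintro ⟨hyK, hyU, hprev⟩
    exact ⟨mem_insert_of_mem hyK, hyU,
      fun z hz hzK => hprev z hz ((mem_insert.1 hzK).resolve_left (hne z hz.1))⟩

theorem assocDiag_iff_of_sdiff_subset (h : IsDownUpPartition n D U) (hK : K ⊆ Icc 1 n)
    (hne : K.Nonempty) (hDK : D \ {1, n} ⊆ K) :
    AssocDiag n D U K x y ↔ x < y ∧ (x = (if 1 ∈ K then 0 else 1) ∨ IsRunEnd U K x) ∧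
      (y = (if n ∈ K then n + 1 else n) ∨ IsRunStart U K y) ∧
        ∀ u ∈ K ∩ U, ¬(x < u ∧ u < y) := by
  rw [AssocDiag, aI_eq_of_sdiff_subset h hK hne hDK, bI_eq_of_sdiff_subset h hK hne hDK]

theorem assocDiag_insert_one_iff (h : IsDownUpPartition n D U) (hK : K ⊆ Icc 1 n)
    (h1K : 1 ∉ K) (hDK : D \ {1, n} ⊆ K) (hx0 : x ≠ 0) (hx1 : x ≠ 1) :
    AssocDiag n D U (insert 1 K) x y ↔ AssocDiag n D U K x y := by
  have h1U : 1 ∉ U := h.notMem_up_of_le_one le_rfl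
  have h2 := h.two_le
  have hn1 : n ≠ 1 := by omega
  rw [assocDiag_iff_of_sdiff_subset h (insert_subset (mem_Icc.2 ⟨le_rfl, by omega⟩) hK)
    (insert_nonempty 1 K) (hDK.trans (subset_insert 1 K))]
  simp only [mem_insert_self, if_true, isRunEnd_insert_of_notMem h1U,
    isRunStart_insert_of_notMem h1U, insert_inter_of_notMem h1U, mem_insert, hn1, false_or, hx0]
  rcases K.eq_empty_or_nonempty with rfl | hne
  · simp only [IsRunEnd, notMem_empty, false_and, and_false, false_iff]
    exact fun hA => (assocDiag_nonempty h.one_mem hA).ne_empty rfl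
  · rw [assocDiag_iff_of_sdiff_subset h hK hne hDK, if_neg h1K]
    simp only [hx1, false_or]

theorem assocDiag_insert_last_iff (h : IsDownUpPartition n D U) (hK : K ⊆ Icc 1 n)
    (hnK : n ∉ K) (hDK : D \ {1, n} ⊆ K) (hyn : y ≠ n) (hyn' : y ≠ n + 1) :
    AssocDiag n D U (insert n K) x y ↔ AssocDiag n D U K x y := by
  have hnU : n ∉ U := h.notMem_up_of_le le_rfl
  have h2 := h.two_le
  have hn1 : 1 ≠ n := by omega
  rw [assocDiag_iff_of_sdiff_subset h (insert_subset (mem_Icc.2 ⟨by omega, le_rfl⟩) hK)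
    (insert_nonempty n K) (hDK.trans (subset_insert n K))]
  simp only [mem_insert_self, if_true, isRunEnd_insert_of_notMem hnU,
    isRunStart_insert_of_notMem hnU, insert_inter_of_notMem hnU, mem_insert, hn1, false_or, hyn']
  rcases K.eq_empty_or_nonempty with rfl | hne
  · simp only [IsRunStart, notMem_empty, false_and, and_false, false_iff]
    exact fun hA => (assocDiag_nonempty h.one_mem hA).ne_empty rfl
  · rw [assocDiag_iff_of_sdiff_subset h hK hne hDK, if_neg hnK]
    simp only [hyn, false_or]


theorem sdiff_one_last_subset_sdiff_corner (h : IsDownUpPartition n D U) (hx : x ≤ 1)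
    (hy : n ≤ y) : D \ {1, n} ⊆ D \ {x, y} := fun d hd => by
  have := mem_Icc.1 (h.down_subset (mem_sdiff.1 hd).1)
  simp only [mem_sdiff, mem_insert, mem_singleton, not_or] at hd ⊢
  exact ⟨hd.1, by omega, by omega⟩

theorem eq_sdiff_of_assocDiag_corner (h : IsDownUpPartition n D U) (hK : K ⊆ Icc 1 n)
    (hDK : D \ {1, n} ⊆ K) (hx : x ≤ 1) (hy : n ≤ y) (hA : AssocDiag n D U K x y) :
    K = D \ {x, y} := by
  have hne := assocDiag_nonempty h.one_mem hA
  rw [assocDiag_iff_of_sdiff_subset h hK hne hDK] at hA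
  obtain ⟨-, hxa, hyb, hU⟩ := hA
  replace hxa := hxa.resolve_right fun hr => h.notMem_up_of_le_one hx hr.2.1
  replace hyb := hyb.resolve_right fun hr => h.notMem_up_of_le hy hr.2.1
  have hx1 : x = 1 ↔ 1 ∉ K := by split_ifs at hxa with h1 <;> simp [h1, hxa]
  have hyn : y = n ↔ n ∉ K := by split_ifs at hyb with hn <;> simp [hn, hyb]
  ext k
  simp only [mem_sdiff, mem_insert, mem_singleton, not_or]
  constructor
  · intro hk
    have hk' := mem_Icc.1 (hK hk)
    rcases h.mem_down_or_up (hK hk) with hkD | hkU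
    · exact ⟨hkD, fun hkx => hx1.1 (by omega) ((show k = 1 by omega) ▸ hk),
        fun hky => hyn.1 (by omega) ((show k = n by omega) ▸ hk)⟩
    · have := h.bounds_of_mem_up hkU
      exact absurd ⟨by omega, by omega⟩ (hU k (mem_inter.2 ⟨hk, hkU⟩))
  · rintro ⟨hkD, hkx, hky⟩
    by_cases hk1 : k = 1
    · subst hk1
      by_contra h1K
      exact hkx (hx1.2 h1K).symm
    by_cases hkn : k = n
    · subst hkn
      by_contra hnK
      exact hky (hyn.2 hnK).symm
    exact hDK (by simp [hkD, hk1, hkn])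

theorem assocDiag_sdiff_corner (h : IsDownUpPartition n D U) (hx : x ≤ 1) (hy : n ≤ y)
    (hy' : y ≤ n + 1) (hne : (D \ {x, y}).Nonempty) : AssocDiag n D U (D \ {x, y}) x y := by
  have h2 := h.two_le
  rw [assocDiag_iff_of_sdiff_subset h (sdiff_subset.trans h.down_subset) hne
    (sdiff_one_last_subset_sdiff_corner h hx hy)]
  refine ⟨by omega, Or.inl ?_, Or.inl ?_, fun u hu => ?_⟩
  · by_cases hx1 : x = 1
    · rw [if_neg (by simp [hx1]), hx1]
    · rw [if_pos (by simp [h.one_mem]; omega)]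
      omega
  · by_cases hyn : y = n
    · rw [if_neg (by simp [hyn]), hyn]
    · rw [if_pos (by simp [h.last_mem]; omega)]
      omega
  · exact (disjoint_left.1 h.disjoint (mem_sdiff.1 (mem_inter.1 hu).1).1 (mem_inter.1 hu).2).elim

theorem assocDiag_corner_iff (h : IsDownUpPartition n D U) (hK : K ⊆ Icc 1 n)
    (hDK : D \ {1, n} ⊆ K) (hx : x ≤ 1) (hy : n ≤ y) (hy' : y ≤ n + 1) :
    AssocDiag n D U K x y ↔ K = D \ {x, y} ∧ K.Nonempty :=
  ⟨fun hA => ⟨eq_sdiff_of_assocDiag_corner h hK hDK hx hy hA, assocDiag_nonempty h.one_mem hA⟩,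
    fun ⟨hK₀, hne⟩ => hK₀ ▸ assocDiag_sdiff_corner h hx hy hy' (hK₀ ▸ hne)⟩

end Diagonals

noncomputable def diagonalSign (n : ℕ) (D U : Finset ℕ) (p : ℕ × ℕ) : ℝ :=
  ∑ K ∈ (Icc 1 n).powerset with D \ {1, n} ⊆ K ∧ AssocDiag n D U K p.1 p.2,
    (-1) ^ #(Icc 1 n \ K)

section Signs

variable {n : ℕ} {D U : Finset ℕ}

theorem diagonalSign_eq_zero_of_left (h : IsDownUpPartition n D U) {p : ℕ × ℕ}
    (hx0 : p.1 ≠ 0) (hx1 : p.1 ≠ 1) : diagonalSign n D U p = 0 := by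
  refine sum_powerset_filter_neg_one_pow_card_sdiff_eq_zero
    (mem_Icc.2 ⟨le_rfl, by have := h.two_le; omega⟩) _ fun K hK h1K => ?_
  rw [subset_insert_iff_of_notMem (show 1 ∉ D \ {1, n} by simp)]
  exact and_congr_right fun hDK => assocDiag_insert_one_iff h hK h1K hDK hx0 hx1

theorem diagonalSign_eq_zero_of_right (h : IsDownUpPartition n D U) {p : ℕ × ℕ}
    (hyn : p.2 ≠ n) (hyn' : p.2 ≠ n + 1) : diagonalSign n D U p = 0 := by
  refine sum_powerset_filter_neg_one_pow_card_sdiff_eq_zero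
    (mem_Icc.2 ⟨by have := h.two_le; omega, le_rfl⟩) _ fun K hK hnK => ?_
  rw [subset_insert_iff_of_notMem (show n ∉ D \ {1, n} by simp)]
  exact and_congr_right fun hDK => assocDiag_insert_last_iff h hK hnK hDK hyn hyn'

theorem diagonalSign_corner (h : IsDownUpPartition n D U) {x y : ℕ} (hx : x ≤ 1) (hy : n ≤ y)
    (hy' : y ≤ n + 1) :
    diagonalSign n D U (x, y) =
      if (D \ {x, y}).Nonempty then (-1) ^ #(Icc 1 n \ (D \ {x, y})) else 0 := by
  rw [diagonalSign, filter_congr fun K hK =>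
    and_congr_right fun hDK => assocDiag_corner_iff h (mem_powerset.1 hK) hDK hx hy hy']
  split_ifs with hne
  · refine sum_eq_single_of_mem _ (mem_filter.2 ⟨mem_powerset.2
      (sdiff_subset.trans h.down_subset), sdiff_one_last_subset_sdiff_corner h hx hy, rfl, hne⟩)
      fun K hK hne' => ?_
    exact absurd (mem_filter.1 hK).2.2.1 hne'
  · exact sum_eq_zero fun K hK => absurd ((mem_filter.1 hK).2.2.1 ▸ (mem_filter.1 hK).2.2.2) hne

theorem sum_filter_nonempty_neg_one_pow (h : IsDownUpPartition n D U) :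
    ∑ K ∈ (Icc 1 n).powerset with D \ {1, n} ⊆ K ∧ K.Nonempty, (-1 : ℝ) ^ #(Icc 1 n \ K) =
      if D \ {1, n} = ∅ then -(-1) ^ n else 0 := by
  have htot : ∑ K ∈ (Icc 1 n).powerset with D \ {1, n} ⊆ K, (-1 : ℝ) ^ #(Icc 1 n \ K) = 0 :=
    sum_powerset_filter_neg_one_pow_card_sdiff_eq_zero
      (mem_Icc.2 ⟨le_rfl, by have := h.two_le; omega⟩) _
      fun K _ _ => subset_insert_iff_of_notMem (show 1 ∉ D \ {1, n} by simp)
  rw [← sum_filter_add_sum_filter_not _ (fun K => K.Nonempty), filter_filter,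
    filter_filter] at htot
  rw [eq_neg_of_add_eq_zero_left htot]
  simp only [not_nonempty_iff_eq_empty]
  split_ifs with hD
  · rw [sum_eq_single_of_mem ∅ (by simp [hD]) fun K hK hne => absurd (mem_filter.1 hK).2.2 hne,
      sdiff_empty, Nat.card_Icc, Nat.add_sub_cancel]
  · refine (neg_eq_zero.2 (sum_eq_zero fun K hK => ?_))
    obtain ⟨-, hDK, rfl⟩ := mem_filter.1 hK
    exact absurd (subset_empty.1 hDK) hD

end Signs

section Evaluation

variable {n : ℕ} {D U : Finset ℕ}

theorem sum_sign_mul_componentValue (h : IsDownUpPartition n D U) :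
    ∑ K ∈ (Icc 1 n).powerset with D \ {1, n} ⊆ K ∧ K.Nonempty,
        (-1 : ℝ) ^ #(Icc 1 n \ K) * componentValue n D U K =
      znAs n * (if D \ {1, n} = ∅ then -(-1) ^ n else 0) +
        ∑ p ∈ range (n + 2) ×ˢ range (n + 2), diagExcess n D U p * diagonalSign n D U p := by
  have hswap : ∀ K p, K ∈ {K ∈ (Icc 1 n).powerset | D \ {1, n} ⊆ K ∧ K.Nonempty} ∧
      p ∈ {p ∈ range (n + 2) ×ˢ range (n + 2) | AssocDiag n D U K p.1 p.2} ↔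
      K ∈ {K ∈ (Icc 1 n).powerset | D \ {1, n} ⊆ K ∧ AssocDiag n D U K p.1 p.2} ∧
        p ∈ range (n + 2) ×ˢ range (n + 2) := by
    intro K p
    simp only [mem_filter]
    exact ⟨fun ⟨⟨hK, hDK, _⟩, hp, hA⟩ => ⟨⟨hK, hDK, hA⟩, hp⟩,
      fun ⟨⟨hK, hDK, hA⟩, hp⟩ => ⟨⟨hK, hDK, assocDiag_nonempty h.one_mem hA⟩, hp, hA⟩⟩
  simp only [componentValue, mul_add, sum_add_distrib, mul_sum]
  rw [← sum_mul, sum_filter_nonempty_neg_one_pow h, mul_comm, add_right_inj, sum_comm' hswap]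
  simp only [diagonalSign, mul_sum, mul_comm]

theorem sum_diagExcess_mul_diagonalSign (h : IsDownUpPartition n D U) :
    ∑ p ∈ range (n + 2) ×ˢ range (n + 2), diagExcess n D U p * diagonalSign n D U p =
      ∑ x ∈ {0, 1}, ∑ y ∈ {n, n + 1}, diagExcess n D U (x, y) * diagonalSign n D U (x, y) := by
  rw [← sum_product' (f := fun x y => diagExcess n D U (x, y) * diagonalSign n D U (x, y))]
  refine (sum_subset (fun p hp => ?_) fun p _ hp => ?_).symm
  · simp only [mem_product, mem_insert, mem_singleton, mem_range] at hp ⊢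
    omega
  · simp only [mem_product, mem_insert, mem_singleton, not_and_or, not_or] at hp
    rcases hp with ⟨hx0, hx1⟩ | ⟨hyn, hyn'⟩
    · rw [diagonalSign_eq_zero_of_left h hx0 hx1, mul_zero]
    · rw [diagonalSign_eq_zero_of_right h hyn hyn', mul_zero]

theorem Rdiag_corner (h : IsDownUpPartition n D U) {x y : ℕ} (hx : x ≤ 1) (hy : n ≤ y) :
    Rdiag n D U x y = D \ {x, y} := by
  rw [Rdiag, if_neg (h.notMem_up_of_le_one hx), if_neg (h.notMem_up_of_le hy)]
  ext d
  simp only [mem_filter, mem_sdiff, mem_insert, mem_singleton, not_or, and_congr_right_iff]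
  intro hd
  have := mem_Icc.1 (h.down_subset hd)
  omega

theorem diagExcess_corner (h : IsDownUpPartition n D U) {x y : ℕ} (hx : x ≤ 1) (hy : n ≤ y)
    (hy' : y ≤ n + 1) (hne : (D \ {x, y}).Nonempty) :
    diagExcess n D U (x, y) =
      (#(D \ {x, y}) : ℝ) * (#(D \ {x, y}) + 1) / 2 - znAs n := by
  have h2 := h.two_le
  rw [diagExcess]
  split_ifs with hp
  · rw [wAs, Rdiag_corner h hx hy]
  obtain ⟨k, hk⟩ := hne
  have hk' := mem_sdiff.1 hk
  have := mem_Icc.1 (h.down_subset hk'.1)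
  simp only [mem_insert, mem_singleton, not_or] at hk'
  have hbd : IsBoundary n D U x y := by
    by_contra hb
    exact hp ⟨by omega, hy', hb⟩
  rcases hbd with hc | ⟨-, ⟨-, hyU, -⟩ | ⟨-, hxU, -⟩ | ⟨hxU, -⟩⟩ | ⟨hU, rfl, rfl⟩
  · exact absurd ⟨by omega, by omega⟩ (hc.2.2.2 k (mem_insert_of_mem (mem_insert_of_mem hk'.1)))
  · exact absurd hyU (h.notMem_up_of_le hy)
  · exact absurd hxU (h.notMem_up_of_le_one hx)
  · exact absurd hxU (h.notMem_up_of_le_one hx)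
  -- `{0, n + 1}` is a boundary edge only when `U = ∅`, and then `R = D = [n]`
  · have hD : D = Icc 1 n := by rw [← h.union_eq, hU, union_empty]
    have hsd : D \ {0, n + 1} = D := sdiff_eq_self_of_disjoint (by simp [hD])
    rw [hsd, hD, Nat.card_Icc, Nat.add_sub_cancel, znAs, sub_self]

/-- The contribution of the corner diagonal `{x, y}` with `|R_{x,y}| = k`. -/
noncomputable def cornerTerm (n k : ℕ) : ℝ :=
  if k = 0 then 0 else (-1) ^ (n - k) * ((k : ℝ) * (k + 1) / 2 - znAs n)

theorem diagExcess_mul_diagonalSign_corner (h : IsDownUpPartition n D U) {x y : ℕ} (hx : x ≤ 1)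
    (hy : n ≤ y) (hy' : y ≤ n + 1) :
    diagExcess n D U (x, y) * diagonalSign n D U (x, y) = cornerTerm n #(D \ {x, y}) := by
  rw [diagonalSign_corner h hx hy hy', cornerTerm]
  split_ifs with hne hk hk
  · exact absurd (card_eq_zero.1 hk) hne.ne_empty
  · rw [diagExcess_corner h hx hy hy' hne, card_sdiff_of_subset (sdiff_subset.trans h.down_subset),
      Nat.card_Icc, Nat.add_sub_cancel, mul_comm]
  · rw [mul_zero]
  · exact absurd (card_pos.1 (Nat.pos_of_ne_zero hk)) hne

theorem card_sdiff_corner (h : IsDownUpPartition n D U) {x y : ℕ} (hx : x ≤ 1) (hy : n ≤ y)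
    (hy' : y ≤ n + 1) : #(D \ {x, y}) + x + n + 1 = #D + y := by
  have h2 := h.two_le
  have h0 : 0 ∉ D := fun h0 => by have := mem_Icc.1 (h.down_subset h0); omega
  have hn1 : n + 1 ∉ D := fun h0 => by have := mem_Icc.1 (h.down_subset h0); omega
  have hsub : {1, n} ⊆ D := insert_subset h.one_mem (singleton_subset_iff.2 h.last_mem)
  have hcard := card_le_card hsub
  rw [card_pair (by omega)] at hcard
  obtain rfl | rfl : x = 0 ∨ x = 1 := by omega
  all_goals obtain hyv | hyv : y = n ∨ y = n + 1 := by omega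
  all_goals
    rw [hyv, card_sdiff]
    simp only [insert_inter_of_notMem h0, insert_inter_of_mem h.one_mem,
      singleton_inter_of_mem h.last_mem, singleton_inter_of_notMem hn1, card_singleton,
      insert_empty, card_empty, card_pair (show 1 ≠ n by omega)]
    omega

end Evaluation

theorem cornerTerm_alternating_sum (m u : ℕ) (hm : 2 ≤ m) :
    znAs (m + u) * (if m = 2 then -(-1) ^ (m + u) else 0) +
      (cornerTerm (m + u) (m - 1) + cornerTerm (m + u) m +
        (cornerTerm (m + u) (m - 2) + cornerTerm (m + u) (m - 1))) = (-1) ^ u := by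
  obtain ⟨k, rfl⟩ : ∃ k, m = k + 2 := ⟨m - 2, by omega⟩
  rw [show k + 2 - 1 = k + 1 by omega, Nat.add_sub_cancel]
  have e1 : k + 2 + u - (k + 1) = u + 1 := by omega
  have e2 : k + 2 + u - (k + 2) = u := by omega
  have e3 : k + 2 + u - k = u + 2 := by omega
  simp only [cornerTerm, e1, e2, e3, add_eq_zero, one_ne_zero, OfNat.ofNat_ne_zero, and_false,
    if_false, add_eq_right]
  rcases Nat.eq_zero_or_pos k with rfl | hk
  · simp only [if_true, pow_add, znAs]
    push_cast
    ring
  · simp only [hk.ne', if_false, pow_add]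
    push_cast
    ring

/-- for the associahedron right-hand sides, `y_{[n]} = (−1)^{|U|}`. -/
theorem statement3 (n : ℕ) (D U : Finset ℕ) (hn : 2 ≤ n)
    (hDU : D ∪ U = Finset.Icc 1 n) (hdisj : Disjoint D U) (h1D : 1 ∈ D) (hnD : n ∈ D) :
    yI n D U (wAs n D U) (znAs n) (Finset.Icc 1 n) = (-1 : ℝ) ^ U.card := by
  have h : IsDownUpPartition n D U := ⟨hn, hDU, hdisj, h1D, hnD⟩
  have hsize : #D + #U = n := by
    rw [← card_union_of_disjoint hdisj, hDU, Nat.card_Icc, Nat.add_sub_cancel]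
  have c0n := card_sdiff_corner h (x := 0) (y := n) (by omega) le_rfl (by omega)
  have c0n' := card_sdiff_corner h (x := 0) (y := n + 1) (by omega) (by omega) le_rfl
  have c1n := card_sdiff_corner h (x := 1) (y := n) le_rfl le_rfl (by omega)
  have c1n' := card_sdiff_corner h (x := 1) (y := n + 1) le_rfl (by omega) le_rfl
  have hempty : D \ {1, n} = ∅ ↔ #D = 2 := by rw [← card_eq_zero]; omega
  rw [yI_eq_sum_isNested h, filter_congr fun K hK =>
      isNested_and_subset_union_nestedBoundary_iff h (mem_powerset.1 hK),
    sum_sign_mul_componentValue h, sum_diagExcess_mul_diagonalSign h, sum_pair zero_ne_one,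
    sum_pair (Nat.succ_ne_self n).symm, sum_pair (Nat.succ_ne_self n).symm,
    diagExcess_mul_diagonalSign_corner h (by omega) le_rfl (by omega),
    diagExcess_mul_diagonalSign_corner h (by omega) (by omega) le_rfl,
    diagExcess_mul_diagonalSign_corner h le_rfl le_rfl (by omega),
    diagExcess_mul_diagonalSign_corner h le_rfl (by omega) le_rfl,
    show #(D \ {0, n}) = #D - 1 by omega, show #(D \ {0, n + 1}) = #D by omega,
    show #(D \ {1, n}) = #D - 2 by omega, show #(D \ {1, n + 1}) = #D - 1 by omega,
    if_congr hempty rfl rfl, ← hsize]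
  exact cornerTerm_alternating_sum #D #U (by omega)

end AssocPaper
end

section
/- Let I ⊆ [n] be nonempty, nested and of type (1,0), i.e. I ∩ U = ∅ and I = {d ∈ D : a < d < b} with a = a(I), b = b(I), and let δ = {a,b}. Then: (a) δ is a proper diagonal if and only if I ≠ [n]; (b) if δ is not proper then δ = {0, n+1} and U = ∅; (c) R_δ = I, where in the non-proper case one uses the convention R_{{0,n+1}} = [n] when U = ∅. -/
open Finset

attribute [local instance] Classical.propDecidable

namespace AssocPaper

/-!
Since `I ⊆ D`, both `a(I)` and `b(I)` lie in `D̄`, hence outside `U`, and every element of `I`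
lies in `D` strictly between them. So `{a, b}` cannot be a boundary edge between consecutive
elements of `D̄` nor one involving `U`; it is a boundary edge only as `{0, n+1}` with `U = ∅`,
which is exactly the case `I = [n]`. When `{a, b}` is proper, `R_{a,b}` is
`{d ∈ D : a < d < b} = I` because neither endpoint lies in `U`.
-/

variable {n : ℕ} {D U I : Finset ℕ}

theorem aI_mem_filter (hI : ∀ i ∈ I, 0 < i) :
    aI D I ∈ (insert 0 D).filter fun e => ∀ i ∈ I, e < i := by
  have h0 : 0 ∈ (insert 0 D).filter fun e => ∀ i ∈ I, e < i :=
    Finset.mem_filter.mpr ⟨Finset.mem_insert_self 0 D, hI⟩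
  obtain ⟨e, he, hsup⟩ := Finset.exists_mem_eq_sup _ ⟨0, h0⟩ id
  rw [aI, hsup]
  exact he

theorem succ_mem_setOf_bI (hI : ∀ i ∈ I, i ≤ n) :
    n + 1 ∈ {e : ℕ | e ∈ insert (n + 1) D ∧ ∀ i ∈ I, i < e} :=
  ⟨Finset.mem_insert_self _ _, fun i hi => Nat.lt_succ_of_le (hI i hi)⟩

theorem bI_mem_setOf (hI : ∀ i ∈ I, i ≤ n) :
    bI n D I ∈ {e : ℕ | e ∈ insert (n + 1) D ∧ ∀ i ∈ I, i < e} :=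
  Nat.sInf_mem ⟨n + 1, succ_mem_setOf_bI hI⟩

theorem bI_le_succ (hI : ∀ i ∈ I, i ≤ n) : bI n D I ≤ n + 1 :=
  Nat.sInf_le (succ_mem_setOf_bI hI)

section Partition

variable (hDU : D ∪ U = Finset.Icc 1 n) (hdisj : Disjoint D U)
include hDU hdisj

theorem notMem_of_mem_Dbar {x : ℕ} (hx : x ∈ Dbar n D) : x ∉ U := by
  intro hxU
  have hx1n := Finset.mem_Icc.mp (hDU ▸ Finset.mem_union_right D hxU)
  simp only [Dbar, Finset.mem_insert] at hx
  rcases hx with rfl | rfl | hxD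
  · omega
  · omega
  · exact Finset.disjoint_left.mp hdisj hxD hxU

theorem isBoundary_iff_of_mem_Dbar {x y d : ℕ} (hx : x ∈ Dbar n D) (hy : y ∈ Dbar n D)
    (hd : d ∈ D) (hxd : x < d) (hdy : d < y) :
    IsBoundary n D U x y ↔ U = ∅ ∧ x = 0 ∧ y = n + 1 := by
  have hxU := notMem_of_mem_Dbar hDU hdisj hx
  have hyU := notMem_of_mem_Dbar hDU hdisj hy
  refine ⟨?_, fun h => Or.inr (Or.inr h)⟩
  rintro (hconsec | ⟨-, ⟨-, hyU', -⟩ | ⟨-, hxU', -⟩ | hconsecU⟩ | h)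
  · exact absurd ⟨hxd, hdy⟩ (hconsec.2.2.2 d (by simp [Dbar, hd]))
  · exact absurd hyU' hyU
  · exact absurd hxU' hxU
  · exact absurd hconsecU.1 hxU
  · exact h

theorem Rdiag_of_mem_Dbar {x y : ℕ} (hx : x ∈ Dbar n D) (hy : y ∈ Dbar n D) :
    Rdiag n D U x y = D.filter fun d => x < d ∧ d < y := by
  rw [Rdiag, if_neg (notMem_of_mem_Dbar hDU hdisj hx), if_neg (notMem_of_mem_Dbar hDU hdisj hy)]

theorem filter_between_eq_Icc_iff {x y : ℕ} (hx : x ∈ insert 0 D) (hy : y ∈ insert (n + 1) D) :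
    D.filter (fun d => x < d ∧ d < y) = Finset.Icc 1 n ↔ U = ∅ ∧ x = 0 ∧ y = n + 1 := by
  have hD : D ⊆ Finset.Icc 1 n := hDU ▸ Finset.subset_union_left
  constructor
  · intro h
    -- An endpoint lying in `D` would lie in `[n]`, i.e. strictly between itself and the other.
    have hmem : ∀ z ∈ D, x < z ∧ z < y := fun z hz =>
      (Finset.mem_filter.mp (h ▸ hD hz : z ∈ D.filter _)).2
    refine ⟨Finset.eq_empty_of_forall_notMem fun u hu => ?_, ?_, ?_⟩
    · have hu' : u ∈ D.filter _ := h ▸ hDU ▸ Finset.mem_union_right D hu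
      exact Finset.disjoint_left.mp hdisj (Finset.mem_filter.mp hu').1 hu
    · rcases Finset.mem_insert.mp hx with hx0 | hxD
      · exact hx0
      · exact absurd (hmem x hxD).1 (lt_irrefl x)
    · rcases Finset.mem_insert.mp hy with hyn | hyD
      · exact hyn
      · exact absurd (hmem y hyD).2 (lt_irrefl y)
  · rintro ⟨rfl, rfl, rfl⟩
    rw [Finset.union_empty] at hDU
    rw [← hDU]
    exact Finset.filter_true_of_mem fun d hd => by
      have := Finset.mem_Icc.mp (hDU ▸ hd); omega

end Partition

theorem statement5_general (n : ℕ) (D U : Finset ℕ)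
    (hDU : D ∪ U = Finset.Icc 1 n) (hdisj : Disjoint D U)
    (I : Finset ℕ) (hne : I.Nonempty)
    (hI : I = D.filter fun d => aI D I < d ∧ d < bI n D I) :
    (IsProper n D U (aI D I) (bI n D I) ↔ I ≠ Finset.Icc 1 n)
    ∧ (¬ IsProper n D U (aI D I) (bI n D I) →
        aI D I = 0 ∧ bI n D I = n + 1 ∧ U = ∅)
    ∧ Rext n D U (aI D I) (bI n D I) = I := by
  obtain ⟨i, hi⟩ := hne
  have hIn : ∀ j ∈ I, 1 ≤ j ∧ j ≤ n := fun j hj =>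
    Finset.mem_Icc.mp (hDU ▸ Finset.mem_union_left U (Finset.mem_filter.mp (hI ▸ hj)).1)
  have ha := Finset.mem_filter.mp (aI_mem_filter (D := D) fun j hj => (hIn j hj).1)
  obtain ⟨hbD, hbI⟩ := bI_mem_setOf (D := D) fun j hj => (hIn j hj).2
  have hbn := bI_le_succ (D := D) fun j hj => (hIn j hj).2
  have haDbar : aI D I ∈ Dbar n D := by
    rcases Finset.mem_insert.mp ha.1 with h | h <;> simp [Dbar, h]
  have hbDbar : bI n D I ∈ Dbar n D := by
    rcases Finset.mem_insert.mp hbD with h | h <;> simp [Dbar, h]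
  have hbdry := isBoundary_iff_of_mem_Dbar hDU hdisj haDbar hbDbar
    (Finset.mem_filter.mp (hI ▸ hi)).1 (ha.2 i hi) (hbI i hi)
  have hIcc : I = Finset.Icc 1 n ↔ U = ∅ ∧ aI D I = 0 ∧ bI n D I = n + 1 := by
    conv_lhs => rw [hI]
    exact filter_between_eq_Icc_iff hDU hdisj ha.1 hbD
  have hproper : IsProper n D U (aI D I) (bI n D I) ↔ I ≠ Finset.Icc 1 n := by
    rw [IsProper, hbdry, ← hIcc]
    exact ⟨fun h => h.2.2, fun h => ⟨(ha.2 i hi).trans (hbI i hi), hbn, h⟩⟩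
  refine ⟨hproper, fun hnp => ?_, ?_⟩
  · obtain ⟨hU, ha0, hb⟩ := hIcc.mp (not_not.mp (hproper.not.mp hnp))
    exact ⟨ha0, hb, hU⟩
  · by_cases hp : IsProper n D U (aI D I) (bI n D I)
    · rw [Rext, if_pos hp, Rdiag_of_mem_Dbar hDU hdisj haDbar hbDbar, ← hI]
    · have hIeq := not_not.mp (hproper.not.mp hp)
      rw [Rext, if_neg hp, if_pos (hIcc.mp hIeq), hIeq]

/-- for nonempty nested `I` of type `(1,0)`, i.e. `I ∩ U = ∅` and
`I = {d ∈ D : a < d < b}`, and `δ = {a,b}`: (a) `δ` is proper iff `I ≠ [n]`;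
(b) if `δ` is not proper then `δ = {0,n+1}` and `U = ∅`; (c) `R_δ = I` (with the
convention `R_{{0,n+1}} = [n]` when `U = ∅` in the non-proper case). -/
theorem statement5 (n : ℕ) (D U : Finset ℕ) (hn : 2 ≤ n)
    (hDU : D ∪ U = Finset.Icc 1 n) (hdisj : Disjoint D U) (h1D : 1 ∈ D) (hnD : n ∈ D)
    (I : Finset ℕ) (hne : I.Nonempty) (hsub : I ⊆ Finset.Icc 1 n)
    (hnested : IsNested n D I) (hIU : I ∩ U = ∅)
    (hI : I = D.filter fun d => aI D I < d ∧ d < bI n D I) :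
    (IsProper n D U (aI D I) (bI n D I) ↔ I ≠ Finset.Icc 1 n)
    ∧ (¬ IsProper n D U (aI D I) (bI n D I) →
        aI D I = 0 ∧ bI n D I = n + 1 ∧ U = ∅)
    ∧ Rext n D U (aI D I) (bI n D I) = I :=
  statement5_general n D U hDU hdisj I hne hI

end AssocPaper
end

section
/- Let I ⊆ [n] be nonempty and nested of type (1,w) with w ≥ 1, with a = a(I), b = b(I), up intervals [α_1,β_1]_U, …, [α_w,β_w]_U, and associated diagonals δ_1 = {a,α_1}, δ_j = {β_{j−1},α_j} for 1 < j < w+1, δ_{w+1} = {β_w,b}. Then: (a) δ_j is a proper diagonal for every 1 < j < w+1; (b) δ_1 is either a proper diagonal or the boundary edge {0, u_1} (where u_1 = min U); (c) δ_{w+1} is either a proper diagonal or the boundary edge {u_m, n+1} (where u_m = max U); (d) if moreover I ≠ [n], then the set W of indices j with δ_j proper is nonempty and, with M = max W, I = R_{δ_M} ∖ ( ⋃_{j ∈ W, j ≠ M} ( [n] ∖ R_{δ_j} ) ). -/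
/-!
An element `d ∈ D` lies in the nested set `I` iff `a(I) < d < b(I)`, and an element `u ∈ U` lies
in `I` iff `α_1 ≤ u ≤ β_w` and `u` lies in none of the gaps `(β_{j-1}, α_j)`. These are exactly
the conditions cut out by `R_{δ_1}` (lower bounds), `R_{δ_{w+1}}` (upper bounds) and `R_{δ_j}`
(the `j`-th gap), so `I` is the intersection of the `R_{δ_j}` inside `[n]`. An end diagonal that is
not proper is the edge `{0, u_1}` or `{u_m, n+1}`, whose condition holds on all of `[n]`; so the
proper diagonals suffice, and if there are none then `I = [n]`. A middle diagonal
`{β_{j-1}, α_j}` is proper since its endpoints lie in `U` without being consecutive there.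
-/

open Finset

attribute [local instance] Classical.propDecidable

namespace AssocPaper

theorem mem_sdiff_biUnion_sdiff_iff {ι α : Type*} [DecidableEq ι] [DecidableEq α]
    {S : Finset α} {R : ι → Finset α} {W : Finset ι} {M : ι} (hM : M ∈ W) (hR : R M ⊆ S)
    {x : α} : x ∈ R M \ (W.erase M).biUnion (fun j => S \ R j) ↔ ∀ j ∈ W, x ∈ R j := by
  simp only [mem_sdiff, mem_biUnion, mem_erase, not_exists, not_and, not_not]
  refine ⟨fun ⟨hxM, hx⟩ j hj => ?_, fun hx => ⟨hx M hM, fun j hj _ => hx j hj.2⟩⟩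
  by_cases hjM : j = M
  · exact hjM ▸ hxM
  · exact hx j ⟨hjM, hj⟩ (hR hxM)

section Polygon

variable {n : ℕ} {D U : Finset ℕ}

theorem not_mem_of_mem_Dbar (hDU : D ∪ U = Icc 1 n) (hdisj : Disjoint D U) {e : ℕ}
    (he : e ∈ Dbar n D) : e ∉ U := by
  intro heU
  have heIcc := mem_Icc.mp (hDU ▸ mem_union_right D heU)
  simp only [Dbar, mem_insert] at he
  rcases he with rfl | rfl | heD
  · omega
  · omega
  · exact disjoint_left.mp hdisj heD heU

theorem le_of_mem_Dbar (hDU : D ∪ U = Icc 1 n) {e : ℕ} (he : e ∈ Dbar n D) : e ≤ n + 1 := by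
  simp only [Dbar, mem_insert] at he
  rcases he with rfl | rfl | heD
  · omega
  · omega
  · exact (mem_Icc.mp (hDU ▸ mem_union_left U heD)).2.trans n.le_succ

theorem isProper_of_mem_of_mem (hDU : D ∪ U = Icc 1 n) (hdisj : Disjoint D U) {x y : ℕ}
    (hx : x ∈ U) (hy : y ∈ U) (hxy : x < y) (hcons : ¬ ConsecIn U x y) :
    IsProper n D U x y := by
  have hxn := mem_Icc.mp (hDU ▸ mem_union_right D hx)
  have hyn := mem_Icc.mp (hDU ▸ mem_union_right D hy)
  refine ⟨hxy, by omega, ?_⟩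
  rintro (hc | ⟨-, ⟨rfl, -⟩ | ⟨rfl, -⟩ | hc⟩ | ⟨rfl, -⟩)
  · exact not_mem_of_mem_Dbar hDU hdisj hc.1 hx
  · omega
  · omega
  · exact hcons hc
  · simp at hx

theorem isProper_or_eq_zero_of_mem_Dbar_of_mem (hDU : D ∪ U = Icc 1 n) (hdisj : Disjoint D U)
    {x y : ℕ} (hx : x ∈ Dbar n D) (hy : y ∈ U) (hxy : x < y) :
    IsProper n D U x y ∨ (x = 0 ∧ y ∈ U ∧ ∀ u ∈ U, y ≤ u) := by
  by_cases hedge : x = 0 ∧ ∀ u ∈ U, y ≤ u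
  · exact Or.inr ⟨hedge.1, hy, hedge.2⟩
  have hyn := mem_Icc.mp (hDU ▸ mem_union_right D hy)
  refine Or.inl ⟨hxy, by omega, ?_⟩
  rintro (hc | ⟨-, ⟨hx0, -, hmin⟩ | ⟨rfl, -⟩ | hc⟩ | ⟨rfl, -⟩)
  · exact not_mem_of_mem_Dbar hDU hdisj hc.2.1 hy
  · exact hedge ⟨hx0, hmin⟩
  · omega
  · exact not_mem_of_mem_Dbar hDU hdisj hx hc.1
  · simp at hy

theorem isProper_or_eq_succ_of_mem_of_mem_Dbar (hDU : D ∪ U = Icc 1 n) (hdisj : Disjoint D U)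
    {x y : ℕ} (hx : x ∈ U) (hy : y ∈ Dbar n D) (hxy : x < y) :
    IsProper n D U x y ∨ (y = n + 1 ∧ x ∈ U ∧ ∀ u ∈ U, u ≤ x) := by
  by_cases hedge : y = n + 1 ∧ ∀ u ∈ U, u ≤ x
  · exact Or.inr ⟨hedge.1, hx, hedge.2⟩
  have hxn := mem_Icc.mp (hDU ▸ mem_union_right D hx)
  refine Or.inl ⟨hxy, le_of_mem_Dbar hDU hy, ?_⟩
  rintro (hc | ⟨-, ⟨rfl, -⟩ | ⟨hyn, -, hmax⟩ | hc⟩ | ⟨rfl, -⟩)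
  · exact not_mem_of_mem_Dbar hDU hdisj hc.1 hx
  · omega
  · exact hedge ⟨hyn, hmax⟩
  · exact not_mem_of_mem_Dbar hDU hdisj hy hc.2.1
  · simp at hx

theorem Rdiag_subset {x y : ℕ} : Rdiag n D U x y ⊆ D ∪ U := by
  intro i hi
  simp only [Rdiag] at hi
  split_ifs at hi <;> simp only [mem_union, mem_filter] at hi ⊢ <;> tauto

theorem mem_Rdiag_of_not_mem_of_mem {x y i : ℕ} (hx : x ∉ U) (hy : y ∈ U) :
    i ∈ Rdiag n D U x y ↔ (i ∈ D ∧ x < i) ∨ (i ∈ U ∧ y ≤ i) := by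
  simp only [Rdiag, if_neg hx, if_pos hy, mem_union, mem_filter]

theorem mem_Rdiag_of_mem_of_mem {x y i : ℕ} (hx : x ∈ U) (hy : y ∈ U) :
    i ∈ Rdiag n D U x y ↔ i ∈ D ∨ (i ∈ U ∧ (i ≤ x ∨ y ≤ i)) := by
  simp only [Rdiag, if_pos hx, if_pos hy, mem_union, mem_filter]
  tauto

theorem mem_Rdiag_of_mem_of_not_mem {x y i : ℕ} (hx : x ∈ U) (hy : y ∉ U) :
    i ∈ Rdiag n D U x y ↔ (i ∈ D ∧ i < y) ∨ (i ∈ U ∧ i ≤ x) := by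
  simp only [Rdiag, if_pos hx, if_neg hy, mem_union, mem_filter]

theorem lower_bounds_of_isProper_imp_mem_Rdiag (hDU : D ∪ U = Icc 1 n) (hdisj : Disjoint D U)
    {x y i : ℕ} (hx : x ∈ Dbar n D) (hy : y ∈ U) (hxy : x < y) (hi : i ∈ Icc 1 n)
    (hR : IsProper n D U x y → i ∈ Rdiag n D U x y) : (i ∈ D → x < i) ∧ (i ∈ U → y ≤ i) := by
  rcases isProper_or_eq_zero_of_mem_Dbar_of_mem hDU hdisj hx hy hxy with hp | ⟨rfl, -, hmin⟩
  · have hiR := (mem_Rdiag_of_not_mem_of_mem (not_mem_of_mem_Dbar hDU hdisj hx) hy).1 (hR hp)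
    have hiDU : i ∈ D → i ∉ U := fun hiD => disjoint_left.mp hdisj hiD
    tauto
  · exact ⟨fun _ => (mem_Icc.mp hi).1, hmin i⟩

theorem upper_bounds_of_isProper_imp_mem_Rdiag (hDU : D ∪ U = Icc 1 n) (hdisj : Disjoint D U)
    {x y i : ℕ} (hx : x ∈ U) (hy : y ∈ Dbar n D) (hxy : x < y) (hi : i ∈ Icc 1 n)
    (hR : IsProper n D U x y → i ∈ Rdiag n D U x y) : (i ∈ D → i < y) ∧ (i ∈ U → i ≤ x) := by
  rcases isProper_or_eq_succ_of_mem_of_mem_Dbar hDU hdisj hx hy hxy with hp | ⟨rfl, -, hmax⟩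
  · have hiR := (mem_Rdiag_of_mem_of_not_mem hx (not_mem_of_mem_Dbar hDU hdisj hy)).1 (hR hp)
    have hiDU : i ∈ D → i ∉ U := fun hiD => disjoint_left.mp hdisj hiD
    tauto
  · exact ⟨fun _ => Nat.lt_succ_of_le (mem_Icc.mp hi).2, hmax i⟩

end Polygon

section Nested

variable {n : ℕ} {D I : Finset ℕ}

theorem aI_spec (hI : I ⊆ Icc 1 n) : aI D I ∈ Dbar n D ∧ ∀ i ∈ I, aI D I < i := by
  have h0 : 0 ∈ (insert 0 D).filter fun e => ∀ i ∈ I, e < i :=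
    mem_filter.mpr ⟨mem_insert_self _ _, fun i hi => (mem_Icc.mp (hI hi)).1⟩
  obtain ⟨e, he, hsup⟩ := exists_mem_eq_sup _ ⟨0, h0⟩ id
  obtain ⟨he0D, hlt⟩ := mem_filter.mp he
  rw [aI, hsup, id]
  exact ⟨insert_subset_insert 0 (subset_insert _ D) he0D, hlt⟩

theorem bI_spec (hI : I ⊆ Icc 1 n) : bI n D I ∈ Dbar n D ∧ ∀ i ∈ I, i < bI n D I := by
  obtain ⟨hmem, hlt⟩ : bI n D I ∈ {e : ℕ | e ∈ insert (n + 1) D ∧ ∀ i ∈ I, i < e} :=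
    Nat.sInf_mem
      ⟨n + 1, mem_insert_self _ _, fun i hi => Nat.lt_succ_of_le (mem_Icc.mp (hI hi)).2⟩
  exact ⟨subset_insert 0 _ hmem, hlt⟩

theorem IsNested.mem_iff (hI : IsNested n D I) {d : ℕ} (hd : d ∈ D) :
    d ∈ I ↔ aI D I < d ∧ d < bI n D I := by
  exact ⟨fun hdI => ⟨(aI_spec hI.2.1).2 d hdI, (bI_spec hI.2.1).2 d hdI⟩,
    fun h => hI.2.2 d hd h.1 h.2⟩

end Nested

structure IsUpIntervals (U I : Finset ℕ) (w : ℕ) (α β : ℕ → ℕ) : Prop where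
  le : ∀ j, 1 ≤ j → j ≤ w → α j ≤ β j
  lt_succ : ∀ j, 1 ≤ j → j < w → β j < α (j + 1)
  mem : ∀ j, 1 ≤ j → j ≤ w → ∀ u ∈ U, α j ≤ u → u ≤ β j → u ∈ I
  isRunStart : ∀ j, 1 ≤ j → j ≤ w → IsRunStart U I (α j)
  isRunEnd : ∀ j, 1 ≤ j → j ≤ w → IsRunEnd U I (β j)
  inter_eq : I ∩ U = (Icc 1 w).biUnion fun j => U.filter fun u => α j ≤ u ∧ u ≤ β j

namespace IsUpIntervals

variable {n : ℕ} {D U I : Finset ℕ} {w : ℕ} {α β : ℕ → ℕ}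

theorem α_mono (h : IsUpIntervals U I w α β) {j k : ℕ} (hj : 1 ≤ j) (hjk : j ≤ k)
    (hk : k ≤ w) : α j ≤ α k := by
  induction k, hjk using Nat.le_induction with
  | base => exact le_rfl
  | succ k hjk ih =>
    have := h.le k (by omega) (by omega)
    have := h.lt_succ k (by omega) (by omega)
    have := ih (by omega)
    omega

theorem β_mono (h : IsUpIntervals U I w α β) {j k : ℕ} (hj : 1 ≤ j) (hjk : j ≤ k)
    (hk : k ≤ w) : β j ≤ β k := by
  induction k, hjk using Nat.le_induction with
  | base => exact le_rfl
  | succ k hjk ih =>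
    have := h.le (k + 1) (by omega) (by omega)
    have := h.lt_succ k (by omega) (by omega)
    have := ih (by omega)
    omega

theorem mem_iff (h : IsUpIntervals U I w α β) (hw : 1 ≤ w) {u : ℕ} (hu : u ∈ U) :
    u ∈ I ↔ α 1 ≤ u ∧ u ≤ β w ∧ ∀ j, 1 < j → j ≤ w → u ≤ β (j - 1) ∨ α j ≤ u := by
  constructor
  · intro huI
    have hk : u ∈ I ∩ U := mem_inter.mpr ⟨huI, hu⟩
    rw [h.inter_eq] at hk
    obtain ⟨k, hk, hku⟩ := mem_biUnion.mp hk
    obtain ⟨hk1, hkw⟩ := mem_Icc.mp hk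
    obtain ⟨-, hαk, hβk⟩ := mem_filter.mp hku
    refine ⟨(h.α_mono le_rfl hk1 hkw).trans hαk, hβk.trans (h.β_mono hk1 hkw le_rfl),
      fun j hj hjw => ?_⟩
    rcases lt_or_ge k j with hkj | hjk
    · exact Or.inl (hβk.trans (h.β_mono hk1 (by omega) (by omega)))
    · exact Or.inr ((h.α_mono (by omega) hjk hkw).trans hαk)
  · rintro ⟨hα1, hβw, hgap⟩
    suffices hle : ∀ k, 1 ≤ k → k ≤ w → u ≤ β k → u ∈ I from hle w hw le_rfl hβw
    intro k hk
    induction k, hk using Nat.le_induction with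
    | base => exact fun hw1 hβ1 => h.mem 1 le_rfl hw1 u hu hα1 hβ1
    | succ k hk ih =>
      intro hkw hβk
      by_cases huk : u ≤ β k
      · exact ih (by omega) huk
      · have hαk : α (k + 1) ≤ u := by
          simpa [huk] using hgap (k + 1) (by omega) hkw
        exact h.mem (k + 1) (by omega) hkw u hu hαk hβk

theorem isProper_mid (h : IsUpIntervals U I w α β) (hDU : D ∪ U = Icc 1 n)
    (hdisj : Disjoint D U) {j : ℕ} (hj : 1 < j) (hjw : j ≤ w) :
    IsProper n D U (β (j - 1)) (α j) := by
  have hend := h.isRunEnd (j - 1) (by omega) (by omega)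
  have hstart := h.isRunStart j (by omega) hjw
  have hlt := h.lt_succ (j - 1) (by omega) (by omega)
  rw [Nat.sub_add_cancel (by omega)] at hlt
  exact isProper_of_mem_of_mem hDU hdisj hend.2.1 hstart.2.1 hlt
    fun hcons => hend.2.2 _ hcons hstart.1

theorem isProper_or_first (h : IsUpIntervals U I w α β) (hDU : D ∪ U = Icc 1 n)
    (hdisj : Disjoint D U) (hsub : I ⊆ Icc 1 n) (hw : 1 ≤ w) :
    IsProper n D U (aI D I) (α 1) ∨ (aI D I = 0 ∧ α 1 ∈ U ∧ ∀ u ∈ U, α 1 ≤ u) := by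
  have hstart := h.isRunStart 1 le_rfl hw
  obtain ⟨haDbar, ha⟩ := aI_spec (D := D) hsub
  exact isProper_or_eq_zero_of_mem_Dbar_of_mem hDU hdisj haDbar hstart.2.1 (ha _ hstart.1)

theorem isProper_or_last (h : IsUpIntervals U I w α β) (hDU : D ∪ U = Icc 1 n)
    (hdisj : Disjoint D U) (hsub : I ⊆ Icc 1 n) (hw : 1 ≤ w) :
    IsProper n D U (β w) (bI n D I) ∨ (bI n D I = n + 1 ∧ β w ∈ U ∧ ∀ u ∈ U, u ≤ β w) := by
  have hend := h.isRunEnd w hw le_rfl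
  obtain ⟨hbDbar, hb⟩ := bI_spec (D := D) hsub
  exact isProper_or_eq_succ_of_mem_of_mem_Dbar hDU hdisj hend.2.1 hbDbar (hb _ hend.1)

end IsUpIntervals

section Diagonals

variable {n : ℕ} {D U I : Finset ℕ} {w : ℕ} {α β : ℕ → ℕ} {diag : ℕ → ℕ × ℕ}

theorem mem_Rdiag_of_mem (hDU : D ∪ U = Icc 1 n) (hdisj : Disjoint D U)
    (hsub : I ⊆ Icc 1 n) (hI : IsUpIntervals U I w α β) (hw : 1 ≤ w)
    (hdiag1 : diag 1 = (aI D I, α 1))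
    (hdiagmid : ∀ j, 1 < j → j ≤ w → diag j = (β (j - 1), α j))
    (hdiagtop : diag (w + 1) = (β w, bI n D I))
    {i j : ℕ} (hi : i ∈ I) (hj : 1 ≤ j) (hjw : j ≤ w + 1) :
    i ∈ Rdiag n D U (diag j).1 (diag j).2 := by
  obtain ⟨haDbar, ha⟩ := aI_spec (D := D) hsub
  obtain ⟨hbDbar, hb⟩ := bI_spec (D := D) hsub
  have hα1 := (hI.isRunStart 1 le_rfl hw).2.1
  have hβw := (hI.isRunEnd w hw le_rfl).2.1
  have hiDU : i ∈ D ∪ U := hDU ▸ hsub hi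
  rcases (show j = 1 ∨ (1 < j ∧ j ≤ w) ∨ j = w + 1 by omega) with rfl | ⟨hj, hjw⟩ | rfl
  · rw [hdiag1, mem_Rdiag_of_not_mem_of_mem (not_mem_of_mem_Dbar hDU hdisj haDbar) hα1]
    rcases mem_union.mp hiDU with hiD | hiU
    · exact Or.inl ⟨hiD, ha i hi⟩
    · exact Or.inr ⟨hiU, ((hI.mem_iff hw hiU).1 hi).1⟩
  · rw [hdiagmid j hj hjw, mem_Rdiag_of_mem_of_mem (hI.isRunEnd (j - 1) (by omega) (by omega)).2.1
      (hI.isRunStart j (by omega) hjw).2.1]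
    rcases mem_union.mp hiDU with hiD | hiU
    · exact Or.inl hiD
    · exact Or.inr ⟨hiU, ((hI.mem_iff hw hiU).1 hi).2.2 j hj hjw⟩
  · rw [hdiagtop, mem_Rdiag_of_mem_of_not_mem hβw (not_mem_of_mem_Dbar hDU hdisj hbDbar)]
    rcases mem_union.mp hiDU with hiD | hiU
    · exact Or.inl ⟨hiD, hb i hi⟩
    · exact Or.inr ⟨hiU, ((hI.mem_iff hw hiU).1 hi).2.1⟩

theorem mem_of_forall_isProper_imp_mem_Rdiag (hDU : D ∪ U = Icc 1 n) (hdisj : Disjoint D U)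
    (hnested : IsNested n D I) (hI : IsUpIntervals U I w α β) (hw : 1 ≤ w)
    (hdiag1 : diag 1 = (aI D I, α 1))
    (hdiagmid : ∀ j, 1 < j → j ≤ w → diag j = (β (j - 1), α j))
    (hdiagtop : diag (w + 1) = (β w, bI n D I)) {i : ℕ} (hi : i ∈ Icc 1 n)
    (hR : ∀ j, 1 ≤ j → j ≤ w + 1 → IsProper n D U (diag j).1 (diag j).2 →
      i ∈ Rdiag n D U (diag j).1 (diag j).2) :
    i ∈ I := by
  have hsub := hnested.2.1
  obtain ⟨haDbar, ha⟩ := aI_spec (D := D) hsub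
  obtain ⟨hbDbar, hb⟩ := bI_spec (D := D) hsub
  have hstart := hI.isRunStart 1 le_rfl hw
  have hend := hI.isRunEnd w hw le_rfl
  have hR1 := hR 1 le_rfl (by omega)
  have hRtop := hR (w + 1) (by omega) le_rfl
  rw [hdiag1] at hR1
  rw [hdiagtop] at hRtop
  obtain ⟨haD, hαU⟩ := lower_bounds_of_isProper_imp_mem_Rdiag hDU hdisj haDbar hstart.2.1
    (ha _ hstart.1) hi hR1
  obtain ⟨hbD, hβU⟩ := upper_bounds_of_isProper_imp_mem_Rdiag hDU hdisj hend.2.1 hbDbar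
    (hb _ hend.1) hi hRtop
  rcases mem_union.mp (hDU ▸ hi) with hiD | hiU
  · exact (hnested.mem_iff hiD).2 ⟨haD hiD, hbD hiD⟩
  · refine (hI.mem_iff hw hiU).2 ⟨hαU hiU, hβU hiU, fun j hj hjw => ?_⟩
    have hRj := hR j (by omega) (by omega)
    rw [hdiagmid j hj hjw] at hRj
    rcases (mem_Rdiag_of_mem_of_mem (hI.isRunEnd (j - 1) (by omega) (by omega)).2.1
        (hI.isRunStart j (by omega) hjw).2.1).1 (hRj (hI.isProper_mid hDU hdisj hj hjw))
      with hiD | ⟨-, hgap⟩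
    · exact absurd hiU (disjoint_left.mp hdisj hiD)
    · exact hgap

end Diagonals

theorem statement6_general (n : ℕ) (D U : Finset ℕ)
    (hDU : D ∪ U = Finset.Icc 1 n) (hdisj : Disjoint D U)
    (I : Finset ℕ)
    (hnested : IsNested n D I)
    (w : ℕ) (hw : 1 ≤ w) (α β : ℕ → ℕ)
    (hαβ : ∀ j, 1 ≤ j → j ≤ w → α j ≤ β j)
    (hmono : ∀ j, 1 ≤ j → j < w → β j < α (j + 1))
    (hrun : ∀ j, 1 ≤ j → j ≤ w → ∀ u ∈ U, α j ≤ u → u ≤ β j → u ∈ I)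
    (hstart : ∀ j, 1 ≤ j → j ≤ w → IsRunStart U I (α j))
    (hend : ∀ j, 1 ≤ j → j ≤ w → IsRunEnd U I (β j))
    (hcover : I ∩ U =
        (Finset.Icc 1 w).biUnion fun j => U.filter fun u => α j ≤ u ∧ u ≤ β j)
    (diag : ℕ → ℕ × ℕ)
    (hdiag1 : diag 1 = (aI D I, α 1))
    (hdiagmid : ∀ j, 1 < j → j ≤ w → diag j = (β (j - 1), α j))
    (hdiagtop : diag (w + 1) = (β w, bI n D I)) :
    (∀ j, 1 < j → j < w + 1 → IsProper n D U (diag j).1 (diag j).2)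
    ∧ (IsProper n D U (diag 1).1 (diag 1).2 ∨
        ((diag 1).1 = 0 ∧ (diag 1).2 ∈ U ∧ ∀ u ∈ U, (diag 1).2 ≤ u))
    ∧ (IsProper n D U (diag (w + 1)).1 (diag (w + 1)).2 ∨
        ((diag (w + 1)).2 = n + 1 ∧ (diag (w + 1)).1 ∈ U ∧ ∀ u ∈ U, u ≤ (diag (w + 1)).1))
    ∧ (I ≠ Finset.Icc 1 n →
        ∀ W : Finset ℕ,
          W = (Finset.Icc 1 (w + 1)).filter
                (fun j => IsProper n D U (diag j).1 (diag j).2) →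
          W.Nonempty ∧
            I = Rdiag n D U (diag (W.sup id)).1 (diag (W.sup id)).2 \
                  (W.erase (W.sup id)).biUnion
                    (fun j => Finset.Icc 1 n \ Rdiag n D U (diag j).1 (diag j).2)) := by
  have hI : IsUpIntervals U I w α β := ⟨hαβ, hmono, hrun, hstart, hend, hcover⟩
  have hsub := hnested.2.1
  refine ⟨fun j hj hjw => ?_, ?_, ?_, fun hIn W hW => ?_⟩
  · rw [hdiagmid j hj (by omega)]
    exact hI.isProper_mid hDU hdisj hj (by omega)
  · rw [hdiag1]
    exact hI.isProper_or_first hDU hdisj hsub hw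
  · rw [hdiagtop]
    exact hI.isProper_or_last hDU hdisj hsub hw
  have hmem_iff : ∀ i ∈ Icc 1 n, i ∈ I ↔ ∀ j ∈ W, i ∈ Rdiag n D U (diag j).1 (diag j).2 := by
    intro i hi
    simp only [hW, mem_filter, mem_Icc, and_imp]
    exact ⟨fun hiI j hj hjw _ => mem_Rdiag_of_mem hDU hdisj hsub hI hw hdiag1 hdiagmid hdiagtop
      hiI hj hjw, mem_of_forall_isProper_imp_mem_Rdiag hDU hdisj hnested hI hw hdiag1 hdiagmid
      hdiagtop hi⟩
  have hWne : W.Nonempty := by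
    refine nonempty_iff_ne_empty.2 fun hW0 => hIn (subset_antisymm hsub fun i hi => ?_)
    exact (hmem_iff i hi).2 (by simp [hW0])
  obtain ⟨M, hM, hMsup⟩ := exists_mem_eq_sup W hWne id
  refine ⟨hWne, ext fun i => ?_⟩
  rw [hMsup, id, mem_sdiff_biUnion_sdiff_iff (R := fun j => Rdiag n D U (diag j).1 (diag j).2) hM
    (hDU ▸ Rdiag_subset)]
  exact ⟨fun hiI => (hmem_iff i (hsub hiI)).1 hiI,
    fun hall => (hmem_iff i (hDU ▸ Rdiag_subset (hall M hM))).2 hall⟩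

/-- for a nonempty nested `I` of type `(1,w)`, `w ≥ 1`, with
up intervals `[α_1,β_1]_U, …, [α_w,β_w]_U` and associated diagonals
`δ_1 = {a,α_1}`, `δ_j = {β_{j−1},α_j}` (`1 < j < w+1`), `δ_{w+1} = {β_w,b}`:
(a) `δ_j` is proper for `1 < j < w+1`; (b) `δ_1` is proper or the boundary edge
`{0,u_1}`; (c) `δ_{w+1}` is proper or the boundary edge `{u_m,n+1}`;
(d) if `I ≠ [n]`, the index set `W` of proper diagonals is nonempty and, with
`M = max W`, `I = R_{δ_M} ∖ ⋃_{j∈W, j≠M} ([n] ∖ R_{δ_j})`. -/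
theorem statement6 (n : ℕ) (D U : Finset ℕ) (hn : 2 ≤ n)
    (hDU : D ∪ U = Finset.Icc 1 n) (hdisj : Disjoint D U) (h1D : 1 ∈ D) (hnD : n ∈ D)
    (I : Finset ℕ) (hne : I.Nonempty) (hsub : I ⊆ Finset.Icc 1 n)
    (hnested : IsNested n D I)
    (w : ℕ) (hw : 1 ≤ w) (α β : ℕ → ℕ)
    (hαβ : ∀ j, 1 ≤ j → j ≤ w → α j ≤ β j)
    (hUmem : ∀ j, 1 ≤ j → j ≤ w → α j ∈ U ∧ β j ∈ U)
    (hmono : ∀ j, 1 ≤ j → j < w → β j < α (j + 1))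
    (hrun : ∀ j, 1 ≤ j → j ≤ w → ∀ u ∈ U, α j ≤ u → u ≤ β j → u ∈ I)
    (hstart : ∀ j, 1 ≤ j → j ≤ w → IsRunStart U I (α j))
    (hend : ∀ j, 1 ≤ j → j ≤ w → IsRunEnd U I (β j))
    (hcover : I ∩ U =
        (Finset.Icc 1 w).biUnion fun j => U.filter fun u => α j ≤ u ∧ u ≤ β j)
    (diag : ℕ → ℕ × ℕ)
    (hdiag1 : diag 1 = (aI D I, α 1))
    (hdiagmid : ∀ j, 1 < j → j ≤ w → diag j = (β (j - 1), α j))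
    (hdiagtop : diag (w + 1) = (β w, bI n D I)) :
    (∀ j, 1 < j → j < w + 1 → IsProper n D U (diag j).1 (diag j).2)
    ∧ (IsProper n D U (diag 1).1 (diag 1).2 ∨
        ((diag 1).1 = 0 ∧ (diag 1).2 ∈ U ∧ ∀ u ∈ U, (diag 1).2 ≤ u))
    ∧ (IsProper n D U (diag (w + 1)).1 (diag (w + 1)).2 ∨
        ((diag (w + 1)).2 = n + 1 ∧ (diag (w + 1)).1 ∈ U ∧ ∀ u ∈ U, u ≤ (diag (w + 1)).1))
    ∧ (I ≠ Finset.Icc 1 n →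
        ∀ W : Finset ℕ,
          W = (Finset.Icc 1 (w + 1)).filter
                (fun j => IsProper n D U (diag j).1 (diag j).2) →
          W.Nonempty ∧
            I = Rdiag n D U (diag (W.sup id)).1 (diag (W.sup id)).2 \
                  (W.erase (W.sup id)).biUnion
                    (fun j => Finset.Icc 1 n \ Rdiag n D U (diag j).1 (diag j).2)) :=
  statement6_general n D U hDU hdisj I hnested w hw α β hαβ hmono hrun hstart hend hcover diag
    hdiag1 hdiagmid hdiagtop

end AssocPaper
end

section
/- Let I be a nonempty proper subset of [n] with nested components J_1, …, J_v. Then each W(J_i) is nonempty and, writing M_i = max W(J_i), I = ⋃_{i=1}^{v} ( R_{δ_{M_i}(J_i)} ∖ ( ⋃_{j ∈ W(J_i), j ≠ M_i} ( [n] ∖ R_{δ_j(J_i)} ) ) ). -/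
open Finset

attribute [local instance] Classical.propDecidable

namespace AssocPaper

/-! Every diagonal `δ` associated to a nested set `J` has `J ⊆ R_δ`. Conversely, for
`i ∈ [n] ∖ J` take `x` the last element of `{a(J)} ∪ {u ∈ J ∩ U | u < i}` and `y` the first
element of `{b(J)} ∪ {u ∈ J ∩ U | i < u}`: then `{x, y}` is an associated diagonal, it is proper,
and `R_{x,y}` misses `i` (were `i ∈ D` between `x` and `y`, nestedness would put it in `J`).
Hence inside `[n]` the set `J` is the intersection of the `R_δ`, `δ ∈ W(J)`, which is what the
`M`-th summand of the union computes, and `W(J) ≠ ∅` once `J ≠ [n]`. Finally, `I` is the union of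
its nested components because singletons are nested. -/

section

variable {n : ℕ} {D U J : Finset ℕ} {i j x y : ℕ}

lemma mem_D_or_mem_U_of_mem_Icc (hDU : D ∪ U = Icc 1 n) (hi : i ∈ Icc 1 n) : i ∈ D ∨ i ∈ U := by
  rwa [← hDU, mem_union] at hi

lemma mem_Icc_of_mem_U (hDU : D ∪ U = Icc 1 n) (hi : i ∈ U) : i ∈ Icc 1 n :=
  hDU ▸ mem_union_right D hi

lemma notMem_Dbar_of_mem_U (hDU : D ∪ U = Icc 1 n) (hdisj : Disjoint D U) (hi : i ∈ U) :
    i ∉ Dbar n D := by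
  have := mem_Icc.1 (mem_Icc_of_mem_U hDU hi)
  simp only [Dbar, mem_insert, not_or]
  exact ⟨by omega, by omega, disjoint_right.1 hdisj hi⟩

lemma Rdiag_subset_Icc (hDU : D ∪ U = Icc 1 n) (x y : ℕ) : Rdiag n D U x y ⊆ Icc 1 n := by
  intro z hz
  rw [← hDU]
  unfold Rdiag at hz
  split_ifs at hz <;> simp only [mem_union, mem_filter] at hz ⊢ <;> tauto

lemma aI_spec_s7 (hJ : J ⊆ Icc 1 n) : aI D J ∈ insert 0 D ∧ ∀ j ∈ J, aI D J < j := by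
  have h0 : 0 ∈ (insert 0 D).filter fun e => ∀ j ∈ J, e < j :=
    mem_filter.2 ⟨mem_insert_self 0 D, fun _ hj => (mem_Icc.1 (hJ hj)).1⟩
  obtain ⟨e, he, hsup⟩ := exists_mem_eq_sup _ ⟨0, h0⟩ id
  rw [aI, hsup]
  exact mem_filter.1 he

lemma le_aI_s7 (hx : x ∈ insert 0 D) (hlt : ∀ j ∈ J, x < j) : x ≤ aI D J :=
  le_sup (f := id) (mem_filter.2 ⟨hx, hlt⟩)

lemma bI_spec_s7 (hJ : J ⊆ Icc 1 n) : bI n D J ∈ insert (n + 1) D ∧ ∀ j ∈ J, j < bI n D J :=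
  Nat.sInf_mem (s := {e | e ∈ insert (n + 1) D ∧ ∀ j ∈ J, j < e}) ⟨n + 1, mem_insert_self _ _,
    fun _ hj => Nat.lt_succ_of_le (mem_Icc.1 (hJ hj)).2⟩

lemma bI_le_s7 (hy : y ∈ insert (n + 1) D) (hlt : ∀ j ∈ J, j < y) : bI n D J ≤ y :=
  Nat.sInf_le ⟨hy, hlt⟩

lemma bI_le_succ_s7 (hJ : J ⊆ Icc 1 n) : bI n D J ≤ n + 1 :=
  bI_le_s7 (mem_insert_self _ _) fun _ hj => Nat.lt_succ_of_le (mem_Icc.1 (hJ hj)).2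

lemma aI_notMem_U (hDU : D ∪ U = Icc 1 n) (hdisj : Disjoint D U) (hJ : J ⊆ Icc 1 n) :
    aI D J ∉ U := by
  rcases mem_insert.1 (aI_spec_s7 (D := D) hJ).1 with h | h
  · intro hU
    have := mem_Icc.1 (mem_Icc_of_mem_U hDU hU)
    omega
  · exact disjoint_left.1 hdisj h

lemma bI_notMem_U (hDU : D ∪ U = Icc 1 n) (hdisj : Disjoint D U) (hJ : J ⊆ Icc 1 n) :
    bI n D J ∉ U := by
  rcases mem_insert.1 (bI_spec_s7 (D := D) hJ).1 with h | h
  · intro hU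
    have := mem_Icc.1 (mem_Icc_of_mem_U hDU hU)
    omega
  · exact disjoint_left.1 hdisj h

lemma mem_WJ (hA : AssocDiag n D U J x y) (hp : IsProper n D U x y) :
    (x, y) ∈ WJ n D U J := by
  obtain ⟨hxy, hy, -⟩ := id hp
  exact mem_filter.2 ⟨mem_product.2 ⟨mem_range.2 (by omega), mem_range.2 (by omega)⟩, hA, hp⟩

namespace IsNested

lemma aI_lt (hJ : IsNested n D J) (hj : j ∈ J) : aI D J < j := (aI_spec_s7 hJ.2.1).2 j hj

lemma lt_bI (hJ : IsNested n D J) (hj : j ∈ J) : j < bI n D J := (bI_spec_s7 hJ.2.1).2 j hj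

lemma le_aI_or_bI_le (hJ : IsNested n D J) (hiD : i ∈ D) (hiJ : i ∉ J) :
    i ≤ aI D J ∨ bI n D J ≤ i := by
  by_contra! h
  exact hiJ (hJ.2.2 i hiD h.1 h.2)

end IsNested

lemma subset_Rdiag_of_assocDiag (hDU : D ∪ U = Icc 1 n) (hJ : IsNested n D J) (hA : AssocDiag n D U J x y) : J ⊆ Rdiag n D U x y := by
  obtain ⟨-, hx, hy, hgap⟩ := hA
  intro j hj
  have haj := hJ.aI_lt hj
  have hjb := hJ.lt_bI hj
  have hxU : x ∉ U → x = aI D J := fun h => hx.resolve_right fun hr => h hr.2.1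
  have hyU : y ∉ U → y = bI n D J := fun h => hy.resolve_right fun hr => h hr.2.1
  unfold Rdiag
  rcases mem_D_or_mem_U_of_mem_Icc hDU (hJ.2.1 hj) with hjD | hjU
  · split_ifs with h1 h2 h2 <;> simp only [mem_union, mem_filter]
    · exact Or.inl (Or.inl hjD)
    · exact Or.inl ⟨hjD, hyU h2 ▸ hjb⟩
    · exact Or.inl ⟨hjD, hxU h1 ▸ haj⟩
    · exact ⟨hjD, hxU h1 ▸ haj, hyU h2 ▸ hjb⟩
  · have hside : j ≤ x ∨ y ≤ j := by
      have := hgap j (mem_inter.2 ⟨hj, hjU⟩)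
      omega
    split_ifs with h1 h2 h2 <;> simp only [mem_union, mem_filter]
    · rcases hside with h | h
      · exact Or.inl (Or.inr ⟨hjU, h⟩)
      · exact Or.inr ⟨hjU, h⟩
    · have := hyU h2
      exact Or.inr ⟨hjU, by omega⟩
    · have := hxU h1
      exact Or.inr ⟨hjU, by omega⟩
    · have := hxU h1
      have := hyU h2
      omega

/-- `(x, y)` is the associated diagonal of `J` whose gap in `J ∩ U` contains `i`. -/
structure IsGapDiag (n : ℕ) (D U J : Finset ℕ) (i x y : ℕ) : Prop where
  left : x = aI D J ∨ (x ∈ J ∩ U ∧ x < i)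
  right : y = bI n D J ∨ (y ∈ J ∩ U ∧ i < y)
  le_left : ∀ u ∈ J ∩ U, u < i → u ≤ x
  right_le : ∀ u ∈ J ∩ U, i < u → y ≤ u

lemma exists_isGapDiag (n : ℕ) (D U J : Finset ℕ) (i : ℕ) : ∃ x y, IsGapDiag n D U J i x y := by
  set L := insert (aI D J) ((J ∩ U).filter (· < i))
  set R := insert (bI n D J) ((J ∩ U).filter (i < ·))
  have hL : L.Nonempty := insert_nonempty _ _
  have hR : R.Nonempty := insert_nonempty _ _
  refine ⟨L.max' hL, R.min' hR, ⟨?_, ?_, fun u hu hui => le_max' L u ?_,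
    fun u hu hiu => min'_le R u ?_⟩⟩
  · simpa only [L, mem_insert, mem_filter] using max'_mem L hL
  · simpa only [R, mem_insert, mem_filter] using min'_mem R hR
  · exact mem_insert_of_mem (mem_filter.2 ⟨hu, hui⟩)
  · exact mem_insert_of_mem (mem_filter.2 ⟨hu, hiu⟩)

namespace IsGapDiag

variable {u : ℕ}

lemma eq_aI_of_notMem_U (hg : IsGapDiag n D U J i x y) (hx : x ∉ U) : x = aI D J :=
  hg.left.resolve_right fun h => hx (mem_inter.1 h.1).2

lemma eq_bI_of_notMem_U (hg : IsGapDiag n D U J i x y) (hy : y ∉ U) : y = bI n D J :=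
  hg.right.resolve_right fun h => hy (mem_inter.1 h.1).2

lemma mem_and_lt_of_mem_U (hDU : D ∪ U = Icc 1 n) (hdisj : Disjoint D U) (hJ : J ⊆ Icc 1 n)
    (hg : IsGapDiag n D U J i x y) (hx : x ∈ U) : x ∈ J ∧ x < i :=
  hg.left.elim (fun h => absurd (h ▸ hx) (aI_notMem_U hDU hdisj hJ))
    fun h => ⟨(mem_inter.1 h.1).1, h.2⟩

lemma mem_and_gt_of_mem_U (hDU : D ∪ U = Icc 1 n) (hdisj : Disjoint D U) (hJ : J ⊆ Icc 1 n)
    (hg : IsGapDiag n D U J i x y) (hy : y ∈ U) : y ∈ J ∧ i < y :=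
  hg.right.elim (fun h => absurd (h ▸ hy) (bI_notMem_U hDU hdisj hJ))
    fun h => ⟨(mem_inter.1 h.1).1, h.2⟩

lemma le_or_le (hiJ : i ∉ J) (hg : IsGapDiag n D U J i x y) (hu : u ∈ J ∩ U) :
    u ≤ x ∨ y ≤ u := by
  rcases lt_trichotomy u i with h | rfl | h
  · exact Or.inl (hg.le_left u hu h)
  · exact absurd (mem_inter.1 hu).1 hiJ
  · exact Or.inr (hg.right_le u hu h)

lemma lt (hJ : IsNested n D J) (hg : IsGapDiag n D U J i x y) : x < y := by
  obtain ⟨j, hj⟩ := hJ.1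
  rcases hg.left with rfl | ⟨hx, hxi⟩ <;> rcases hg.right with rfl | ⟨hy, hiy⟩
  · exact (hJ.aI_lt hj).trans (hJ.lt_bI hj)
  · exact hJ.aI_lt (mem_inter.1 hy).1
  · exact hJ.lt_bI (mem_inter.1 hx).1
  · exact hxi.trans hiy

lemma of_mem_D (hDU : D ∪ U = Icc 1 n) (hdisj : Disjoint D U) (hJ : IsNested n D J)
    (hiJ : i ∉ J) (hg : IsGapDiag n D U J i x y) (hiD : i ∈ D) :
    (x ∉ U ∧ i ≤ x) ∨ (y ∉ U ∧ y ≤ i) := by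
  rcases hJ.le_aI_or_bI_le hiD hiJ with h | h
  · refine Or.inl ⟨fun hx => ?_, ?_⟩
    · have := hg.mem_and_lt_of_mem_U hDU hdisj hJ.2.1 hx
      have := hJ.aI_lt this.1
      omega
    · rcases hg.left with rfl | ⟨hx, -⟩
      · exact h
      · exact h.trans (hJ.aI_lt (mem_inter.1 hx).1).le
  · refine Or.inr ⟨fun hy => ?_, ?_⟩
    · have := hg.mem_and_gt_of_mem_U hDU hdisj hJ.2.1 hy
      have := hJ.lt_bI this.1
      omega
    · rcases hg.right with rfl | ⟨hy, -⟩
      · exact h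
      · exact (hJ.lt_bI (mem_inter.1 hy).1).le.trans h

lemma isRunEnd (hDU : D ∪ U = Icc 1 n) (hJ : IsNested n D J) (hi : i ∈ Icc 1 n) (hiJ : i ∉ J)
    (hg : IsGapDiag n D U J i x y) (hxJ : x ∈ J) (hxU : x ∈ U) (hxi : x < i) :
    IsRunEnd U J x := by
  refine ⟨hxJ, hxU, fun s ⟨_, hsU, hxs, hnone⟩ hsJ => ?_⟩
  have his : i < s := by
    rcases lt_trichotomy s i with h | rfl | h
    · exact absurd (hg.le_left s (mem_inter.2 ⟨hsJ, hsU⟩) h) (not_le.2 hxs)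
    · exact absurd hsJ hiJ
    · exact h
  rcases mem_D_or_mem_U_of_mem_Icc hDU hi with hiD | hiU
  · have := hJ.aI_lt hxJ
    have := hJ.lt_bI hsJ
    have := hJ.le_aI_or_bI_le hiD hiJ
    omega
  · exact hnone i hiU ⟨hxi, his⟩

lemma isRunStart (hDU : D ∪ U = Icc 1 n) (hJ : IsNested n D J) (hi : i ∈ Icc 1 n) (hiJ : i ∉ J)
    (hg : IsGapDiag n D U J i x y) (hyJ : y ∈ J) (hyU : y ∈ U) (hiy : i < y) :
    IsRunStart U J y := by
  refine ⟨hyJ, hyU, fun s ⟨hsU, _, hsy, hnone⟩ hsJ => ?_⟩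
  have hsi : s < i := by
    rcases lt_trichotomy s i with h | rfl | h
    · exact h
    · exact absurd hsJ hiJ
    · exact absurd (hg.right_le s (mem_inter.2 ⟨hsJ, hsU⟩) h) (not_le.2 hsy)
  rcases mem_D_or_mem_U_of_mem_Icc hDU hi with hiD | hiU
  · have := hJ.aI_lt hsJ
    have := hJ.lt_bI hyJ
    have := hJ.le_aI_or_bI_le hiD hiJ
    omega
  · exact hnone i hiU ⟨hsi, hiy⟩

lemma assocDiag (hDU : D ∪ U = Icc 1 n) (hJ : IsNested n D J) (hi : i ∈ Icc 1 n) (hiJ : i ∉ J)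
    (hg : IsGapDiag n D U J i x y) : AssocDiag n D U J x y := by
  refine ⟨hg.lt hJ, hg.left.imp_right fun h => ?_, hg.right.imp_right fun h => ?_, fun u hu => ?_⟩
  · exact hg.isRunEnd hDU hJ hi hiJ (mem_inter.1 h.1).1 (mem_inter.1 h.1).2 h.2
  · exact hg.isRunStart hDU hJ hi hiJ (mem_inter.1 h.1).1 (mem_inter.1 h.1).2 h.2
  · have := hg.le_or_le hiJ hu
    omega

lemma not_consecIn_Dbar (hDU : D ∪ U = Icc 1 n) (hdisj : Disjoint D U) (hJ : IsNested n D J)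
    (hiJ : i ∉ J) (hg : IsGapDiag n D U J i x y) : ¬ ConsecIn (Dbar n D) x y := by
  rintro ⟨hxD, hyD, -, hnone⟩
  have hx := hg.eq_aI_of_notMem_U fun h => notMem_Dbar_of_mem_U hDU hdisj h hxD
  have hy := hg.eq_bI_of_notMem_U fun h => notMem_Dbar_of_mem_U hDU hdisj h hyD
  obtain ⟨j, hj⟩ := hJ.1
  have := hJ.aI_lt hj
  have := hJ.lt_bI hj
  rcases mem_D_or_mem_U_of_mem_Icc hDU (hJ.2.1 hj) with hjD | hjU
  · exact hnone j (mem_insert_of_mem (mem_insert_of_mem hjD)) ⟨by omega, by omega⟩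
  · have := hg.le_or_le hiJ (mem_inter.2 ⟨hj, hjU⟩)
    omega

lemma isProper (hDU : D ∪ U = Icc 1 n) (hdisj : Disjoint D U) (hJ : IsNested n D J)
    (hi : i ∈ Icc 1 n) (hiJ : i ∉ J) (hg : IsGapDiag n D U J i x y) : IsProper n D U x y := by
  have hi' := mem_Icc.1 hi
  have hiD := hg.of_mem_D hDU hdisj hJ hiJ
  refine ⟨hg.lt hJ, ?_, ?_⟩
  · by_cases hy : y ∈ U
    · have := mem_Icc.1 (mem_Icc_of_mem_U hDU hy)
      omega
    · exact hg.eq_bI_of_notMem_U hy ▸ bI_le_succ_s7 hJ.2.1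
  rintro (hc | ⟨-, ⟨rfl, hyU, hymin⟩ | ⟨rfl, hxU, hxmax⟩ | ⟨hxU, hyU, -, hnone⟩⟩ | ⟨rfl, rfl, rfl⟩)
  · exact hg.not_consecIn_Dbar hDU hdisj hJ hiJ hc
  · have := (hg.mem_and_gt_of_mem_U hDU hdisj hJ.2.1 hyU).2
    rcases mem_D_or_mem_U_of_mem_Icc hDU hi with hiD' | hiU
    · rcases hiD hiD' with ⟨-, h⟩ | ⟨h, -⟩
      · omega
      · exact h hyU
    · have := hymin i hiU
      omega
  · have := (hg.mem_and_lt_of_mem_U hDU hdisj hJ.2.1 hxU).2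
    rcases mem_D_or_mem_U_of_mem_Icc hDU hi with hiD' | hiU
    · rcases hiD hiD' with ⟨h, -⟩ | ⟨-, h⟩
      · exact h hxU
      · omega
    · have := hxmax i hiU
      omega
  · have := (hg.mem_and_lt_of_mem_U hDU hdisj hJ.2.1 hxU).2
    have := (hg.mem_and_gt_of_mem_U hDU hdisj hJ.2.1 hyU).2
    rcases mem_D_or_mem_U_of_mem_Icc hDU hi with hiD' | hiU
    · rcases hiD hiD' with ⟨h, -⟩ | ⟨h, -⟩
      · exact h hxU
      · exact h hyU
    · exact hnone i hiU ⟨by omega, by omega⟩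
  · rcases mem_D_or_mem_U_of_mem_Icc hDU hi with hiD' | hiU
    · rcases hiD hiD' with ⟨-, h⟩ | ⟨-, h⟩ <;> omega
    · simp at hiU

lemma notMem_Rdiag (hDU : D ∪ U = Icc 1 n) (hdisj : Disjoint D U) (hJ : IsNested n D J)
    (hi : i ∈ Icc 1 n) (hiJ : i ∉ J) (hg : IsGapDiag n D U J i x y) : i ∉ Rdiag n D U x y := by
  have hxi : x ∈ U → x < i := fun h => (hg.mem_and_lt_of_mem_U hDU hdisj hJ.2.1 h).2
  have hiy : y ∈ U → i < y := fun h => (hg.mem_and_gt_of_mem_U hDU hdisj hJ.2.1 h).2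
  unfold Rdiag
  rcases mem_D_or_mem_U_of_mem_Icc hDU hi with hiD | hiU
  · have hiU := disjoint_left.1 hdisj hiD
    rcases hg.of_mem_D hDU hdisj hJ hiJ hiD with ⟨hxU, hix⟩ | ⟨hyU, hyi⟩
    · split_ifs <;> simp [hiD, hiU] <;> omega
    · split_ifs <;> simp [hiD, hiU] <;> omega
  · have hiD : i ∉ D := disjoint_right.1 hdisj hiU
    split_ifs <;> simp [*]

end IsGapDiag

lemma exists_mem_WJ_notMem_Rdiag (hDU : D ∪ U = Icc 1 n) (hdisj : Disjoint D U)
    (hJ : IsNested n D J) (hi : i ∈ Icc 1 n) (hiJ : i ∉ J) :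
    ∃ q ∈ WJ n D U J, i ∉ Rdiag n D U q.1 q.2 := by
  obtain ⟨x, y, hg⟩ := exists_isGapDiag n D U J i
  exact ⟨(x, y), mem_WJ (hg.assocDiag hDU hJ hi hiJ) (hg.isProper hDU hdisj hJ hi hiJ),
    hg.notMem_Rdiag hDU hdisj hJ hi hiJ⟩

lemma WJ_nonempty (hDU : D ∪ U = Icc 1 n) (hdisj : Disjoint D U) (hJ : IsNested n D J)
    (hJn : J ≠ Icc 1 n) : (WJ n D U J).Nonempty := by
  obtain ⟨i, hi, hiJ⟩ := exists_of_ssubset (ssubset_of_subset_of_ne hJ.2.1 hJn)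
  obtain ⟨q, hq, -⟩ := exists_mem_WJ_notMem_Rdiag hDU hdisj hJ hi hiJ
  exact ⟨q, hq⟩

lemma Rdiag_sdiff_biUnion_WJ_eq (hDU : D ∪ U = Icc 1 n) (hdisj : Disjoint D U)
    (hJ : IsNested n D J) {M : ℕ × ℕ} (hM : M ∈ WJ n D U J) :
    Rdiag n D U M.1 M.2 \ ((WJ n D U J).erase M).biUnion
      (fun q => Icc 1 n \ Rdiag n D U q.1 q.2) = J := by
  have hsub : ∀ q ∈ WJ n D U J, J ⊆ Rdiag n D U q.1 q.2 := fun q hq =>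
    subset_Rdiag_of_assocDiag hDU hJ (mem_filter.1 hq).2.1
  ext i
  simp only [mem_sdiff, mem_biUnion, mem_erase, not_exists, not_and]
  constructor
  · rintro ⟨hiM, hall⟩
    by_contra hiJ
    have hi := Rdiag_subset_Icc hDU _ _ hiM
    obtain ⟨q, hq, hiq⟩ := exists_mem_WJ_notMem_Rdiag hDU hdisj hJ hi hiJ
    exact hall q ⟨fun h => hiq (h ▸ hiM), hq⟩ hi hiq
  · intro hiJ
    exact ⟨hsub M hM hiJ, fun q hq _ hiq => hiq (hsub q hq.2 hiJ)⟩

lemma isNested_singleton (hi : i ∈ Icc 1 n) : IsNested n D {i} := by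
  refine ⟨singleton_nonempty i, singleton_subset_iff.2 hi, fun d hd had hdb => ?_⟩
  have := le_aI_s7 (J := {i}) (mem_insert_of_mem hd)
  have := bI_le_s7 (n := n) (J := {i}) (mem_insert_of_mem hd)
  simp only [mem_singleton, forall_eq] at *
  omega

lemma biUnion_nestedComponents {I : Finset ℕ} (hI : I ⊆ Icc 1 n) :
    (nestedComponents n D I).biUnion id = I := by
  ext i
  simp only [mem_biUnion, id]
  constructor
  · rintro ⟨J, hJ, hiJ⟩
    exact mem_powerset.1 (mem_filter.1 hJ).1 hiJ
  · intro hi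
    have hsingle : {i} ∈ I.powerset.filter (IsNested n D) :=
      mem_filter.2 ⟨mem_powerset.2 (singleton_subset_iff.2 hi), isNested_singleton (hI hi)⟩
    obtain ⟨J, hiJ, hmax⟩ := exists_le_maximal _ hsingle
    obtain ⟨hJI, hJ⟩ := mem_filter.1 hmax.1
    refine ⟨J, mem_filter.2 ⟨hJI, hJ, fun K hK hKn hJK => ?_⟩, singleton_subset_iff.1 hiJ⟩
    exact le_antisymm hJK (hmax.2 (mem_filter.2 ⟨hK, hKn⟩) hJK)

end

theorem statement7_general (n : ℕ) (D U : Finset ℕ)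
    (hDU : D ∪ U = Finset.Icc 1 n) (hdisj : Disjoint D U)
    (I : Finset ℕ) (hsub : I ⊆ Finset.Icc 1 n)
    (hpropersub : I ≠ Finset.Icc 1 n) :
    (∀ J ∈ nestedComponents n D I, (WJ n D U J).Nonempty)
    ∧ ∀ Mp : Finset ℕ → ℕ × ℕ,
        (∀ J ∈ nestedComponents n D I,
          Mp J ∈ WJ n D U J ∧ ∀ q ∈ WJ n D U J, q.1 ≤ (Mp J).1) →
        I = (nestedComponents n D I).biUnion fun J =>
              Rdiag n D U (Mp J).1 (Mp J).2 \
                ((WJ n D U J).erase (Mp J)).biUnion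
                  (fun q => Finset.Icc 1 n \ Rdiag n D U q.1 q.2) := by
  have hcomp : ∀ J ∈ nestedComponents n D I, J ⊆ I ∧ IsNested n D J := fun J hJ =>
    ⟨mem_powerset.1 (mem_filter.1 hJ).1, (mem_filter.1 hJ).2.1⟩
  refine ⟨fun J hJ => WJ_nonempty hDU hdisj (hcomp J hJ).2 fun hJn => hpropersub ?_,
    fun Mp hMp => ?_⟩
  · exact subset_antisymm hsub (hJn ▸ (hcomp J hJ).1)
  · calc I = (nestedComponents n D I).biUnion id := (biUnion_nestedComponents hsub).symm
      _ = _ := biUnion_congr rfl fun J hJ =>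
        (Rdiag_sdiff_biUnion_WJ_eq hDU hdisj (hcomp J hJ).2 (hMp J hJ).1).symm

/-- for a nonempty proper subset `I` of `[n]` with nested components
`J_1, …, J_v`, each `W(J_i)` is nonempty and, writing `M_i` for the maximal (last)
proper diagonal of `W(J_i)`,
`I = ⋃_i ( R_{δ_{M_i}(J_i)} ∖ ⋃_{q ∈ W(J_i), q ≠ M_i} ([n] ∖ R_q) )`. -/
theorem statement7 (n : ℕ) (D U : Finset ℕ) (hn : 2 ≤ n)
    (hDU : D ∪ U = Finset.Icc 1 n) (hdisj : Disjoint D U) (h1D : 1 ∈ D) (hnD : n ∈ D)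
    (I : Finset ℕ) (hne : I.Nonempty) (hsub : I ⊆ Finset.Icc 1 n)
    (hpropersub : I ≠ Finset.Icc 1 n) :
    (∀ J ∈ nestedComponents n D I, (WJ n D U J).Nonempty)
    ∧ ∀ Mp : Finset ℕ → ℕ × ℕ,
        (∀ J ∈ nestedComponents n D I,
          Mp J ∈ WJ n D U J ∧ ∀ q ∈ WJ n D U J, q.1 ≤ (Mp J).1) →
        I = (nestedComponents n D I).biUnion fun J =>
              Rdiag n D U (Mp J).1 (Mp J).2 \
                ((WJ n D U J).erase (Mp J)).biUnion
                  (fun q => Finset.Icc 1 n \ Rdiag n D U q.1 q.2) :=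
  statement7_general n D U hDU hdisj I hsub hpropersub

end AssocPaper
end
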